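/- arXiv:math/0006169 — 8 statements merged into one kernel-verified Lean document; each statement's English description precedes it below -/
import Mathlib

section
/- Let B be a G-graded C*-algebra with dynamics σ as above. A state ψ on B is a ground state (i.e., sup_{Im z ≥ 0} |ψ(a σ_z(b))| < ∞ for all analytic a, b) if and only if ψ(B B_g) = {0} whenever N(g) < 1. -/
/-- For a `G`-graded C*-algebra `B` with dynamics determined by a
group homomorphism `N : G → ℝ₊*` via `σ_t b = N(g)^{it} b` for `b ∈ B_g`, a state `ψ`
is a ground state — i.e. `sup_{Im z ≥ 0} |ψ(a σ_z(b))| < ∞` for every `a ∈ B` and every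
`b` in the norm-dense subalgebra `⊕_g B_g` of analytic elements, where
`σ_z` multiplies the `g`-component by `N(g)^{iz}` — if and only if `ψ(B B_g) = {0}`
whenever `N(g) < 1`. -/
theorem stmt_2 {G : Type*} [Group G] {B : Type*} [NormedRing B] [StarRing B] [CStarRing B]
    [NormedAlgebra ℂ B] [CompleteSpace B] [StarModule ℂ B]
    (Bg : G → Submodule ℂ B)
    (hclosed : ∀ g, IsClosed (Bg g : Set B))
    (hmul : ∀ g h, ∀ a ∈ Bg g, ∀ b ∈ Bg h, a * b ∈ Bg (g * h))
    (hstar : ∀ g, ∀ a ∈ Bg g, star a ∈ Bg g⁻¹)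
    (hindep : iSupIndep Bg)
    (hdense : (⨆ g, Bg g).topologicalClosure = ⊤)
    (N : G → ℝ) (hNpos : ∀ g, 0 < N g) (hNmul : ∀ g h, N (g * h) = N g * N h)
    (ψ : B →L[ℂ] ℂ) (hψ1 : ψ 1 = 1)
    (hψpos : ∀ b : B, 0 ≤ (ψ (star b * b)).re ∧ (ψ (star b * b)).im = 0) :
    (∀ (a : B) (s : G →₀ B), (∀ g, s g ∈ Bg g) →
        ∃ C : ℝ, ∀ z : ℂ, 0 ≤ z.im →
          ‖ψ (a * s.sum fun g bg => ((N g : ℂ) ^ (Complex.I * z)) • bg)‖ ≤ C)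
      ↔ (∀ g : G, N g < 1 → ∀ (a : B), ∀ b ∈ Bg g, ψ (a * b) = 0) := by
  constructor
  · intro H g hg a b hb
    obtain ⟨C, hC⟩ := H a (Finsupp.single g b) (by
      intro g'
      rcases eq_or_ne g' g with rfl | h
      · simpa using hb
      · rw [Finsupp.single_eq_of_ne' (Ne.symm h)]; exact zero_mem _)
    by_contra hne
    have hpos : 0 < ‖ψ (a * b)‖ := norm_pos_iff.mpr hne
    have key : ∀ t : ℝ, 0 ≤ t → N g ^ (-t) * ‖ψ (a * b)‖ ≤ C := by
      intro t ht
      have h0 := hC (t * Complex.I) (by simp [ht])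
      rw [Finsupp.sum_single_index (by simp)] at h0
      rw [mul_smul_comm, map_smul, norm_smul] at h0
      have hre : (Complex.I * (t * Complex.I)).re = -t := by
        simp [Complex.mul_re]
      rw [
        Complex.norm_cpow_eq_rpow_re_of_pos (hNpos g), hre] at h0
      exact h0
    have htop : Filter.Tendsto (fun t : ℝ => N g ^ (-t) * ‖ψ (a * b)‖)
        Filter.atTop Filter.atTop := by
      exact Filter.Tendsto.atTop_mul_const hpos
        ((tendsto_rpow_atBot_of_base_lt_one (N g) (hNpos g) hg).comp
          Filter.tendsto_neg_atTop_atBot)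
    obtain ⟨t, ht, hCt⟩ := ((htop.eventually_gt_atTop C).and
      (Filter.eventually_ge_atTop 0)).exists
    exact absurd (key t hCt) (not_le.mpr ht)
  · intro H a s hs
    refine ⟨∑ g ∈ s.support, ‖ψ (a * s g)‖, fun z hz => ?_⟩
    have hrw : ψ (a * s.sum fun g bg => ((N g : ℂ) ^ (Complex.I * z)) • bg)
        = ∑ g ∈ s.support, ((N g : ℂ) ^ (Complex.I * z)) * ψ (a * s g) := by
      rw [Finsupp.sum, Finset.mul_sum, map_sum]
      refine Finset.sum_congr rfl fun g _ => ?_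
      rw [mul_smul_comm, map_smul, smul_eq_mul]
    rw [hrw]
    refine (norm_sum_le _ _).trans (Finset.sum_le_sum fun g _ => ?_)
    rw [norm_mul]
    rcases lt_or_ge (N g) 1 with h1 | h1
    · simp [H g h1 a (s g) (hs g)]
    · have : ‖(N g : ℂ) ^ (Complex.I * z)‖ ≤ 1 := by
        rw [Complex.norm_cpow_eq_rpow_re_of_pos (hNpos g)]
        have hre : (Complex.I * z).re = -z.im := by simp [Complex.mul_re]
        rw [hre]
        exact Real.rpow_le_one_of_one_le_of_nonpos h1 (neg_nonpos.mpr hz)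
      calc ‖(N g : ℂ) ^ (Complex.I * z)‖ * ‖ψ (a * s g)‖
          ≤ 1 * ‖ψ (a * s g)‖ := by gcongr
        _ = ‖ψ (a * s g)‖ := one_mul _
end

section
/- Let Θ be a partial action of a discrete group G on a C*-algebra A and β ∈ (0,∞). A state φ on A satisfies φ(ab) = N(g)^β φ(ba) for all a ∈ B_{g⁻¹} = D_{g⁻¹}δ_{g⁻¹} and b ∈ B_g = D_g δ_g (for the fixed g and also for g = e) if and only if φ is a trace and φ(θ_g(a)) = N(g)^{-β} φ(a) for all a ∈ D_{g⁻¹}. -/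
/-!
Since `θ_g` is multiplicative on `D_{g⁻¹}` and `θ_{g⁻¹} ∘ θ_g = id` there, the KMS condition with
`a = q`, `b = θ_g(p)` reads `φ(qp) = N(g)^β φ(θ_g(pq))`; with the trace property this is the
scaling `φ ∘ θ_g = N(g)^{-β} φ` on products of elements of `D_{g⁻¹}`. Products are dense in the
ideal `D_{g⁻¹}`, since `a = lim_{ε → 0⁺} a · (a⋆a)(a⋆a + ε)⁻¹` by the functional calculus, and
`φ ∘ θ_g` is continuous on `D_{g⁻¹}` because `θ_g` is isometric there, so the scaling holds on
all of `D_{g⁻¹}`. Conversely, the scaling gives `φ ∘ θ_{g⁻¹} = N(g)^β φ` on `D_g`, and then the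
KMS condition follows from the trace property and `θ_{g⁻¹}(b θ_g(a)) = θ_{g⁻¹}(b) a`.
-/

open Filter Topology
open scoped Pointwise

lemma abs_mul_add_inv_sub_one_mul_self_le {t ε : ℝ} (ht : 0 ≤ t) (hε : 0 < ε) :
    |(t * (t + ε)⁻¹ - 1) * t * (t * (t + ε)⁻¹ - 1)| ≤ ε := by
  have hpos : 0 < t + ε := by positivity
  have heq : (t * (t + ε)⁻¹ - 1) * t * (t * (t + ε)⁻¹ - 1) = ε * (t * ε / (t + ε) ^ 2) := by
    field_simp; ring
  rw [heq, abs_of_nonneg (by positivity)]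
  refine mul_le_of_le_one_right hε.le ((div_le_one (by positivity)).2 ?_)
  nlinarith

theorem LinearMap.continuousOn_of_forall_norm_map_eq {𝕜 E F : Type*} [Ring 𝕜]
    [SeminormedAddCommGroup E] [SeminormedAddCommGroup F] [Module 𝕜 E] [Module 𝕜 F]
    (T : E →ₗ[𝕜] F) {S : Submodule 𝕜 E} (h : ∀ x ∈ S, ‖T x‖ = ‖x‖) : ContinuousOn T S := by
  rw [continuousOn_iff_continuous_domRestrict]
  exact (AddMonoidHomClass.isometry_of_norm (f := T.domRestrict S) fun x : S => h x x.2).continuous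

section CStarAlgebra

variable {A : Type*} [CStarAlgebra A]

lemma norm_mul_cfc_star_mul_self_sq (a : A) {f : ℝ → ℝ}
    (hf : ContinuousOn f (spectrum ℝ (star a * a))) :
    ‖a * cfc f (star a * a)‖ ^ 2 = ‖cfc (fun t => f t * t * f t) (star a * a)‖ := by
  have hsa : IsSelfAdjoint (cfc f (star a * a)) := cfc_predicate _ _
  rw [sq, ← CStarRing.norm_star_mul_self, star_mul, hsa.star_eq,
    cfc_mul (fun t => f t * t) f _ (hf.mul continuousOn_id) hf,
    cfc_mul f (fun t => t) _ hf continuousOn_id, cfc_id' ℝ (star a * a), mul_assoc,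
    ← mul_assoc (star a), ← mul_assoc]

lemma norm_mul_star_mul_self_mul_cfc_sub_le (a : A) {ε : ℝ} (hε : 0 < ε) :
    ‖a * (star a * a * cfc (fun t : ℝ => (t + ε)⁻¹) (star a * a)) - a‖ ≤ √ε := by
  have hspec : ∀ t ∈ spectrum ℝ (star a * a), 0 ≤ t := spectrum_star_mul_self_nonneg
  have hinv : ContinuousOn (fun t : ℝ => (t + ε)⁻¹) (spectrum ℝ (star a * a)) :=
    ContinuousOn.inv₀ (by fun_prop) fun t ht => by linarith [hspec t ht]
  have hf : ContinuousOn (fun t : ℝ => t * (t + ε)⁻¹ - 1) (spectrum ℝ (star a * a)) :=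
    (continuousOn_id.mul hinv).sub continuousOn_const
  have hfactor : a * (star a * a * cfc (fun t : ℝ => (t + ε)⁻¹) (star a * a)) - a
      = a * cfc (fun t : ℝ => t * (t + ε)⁻¹ - 1) (star a * a) := by
    rw [cfc_sub (fun t : ℝ => t * (t + ε)⁻¹) (fun _ => 1) _ (continuousOn_id.mul hinv)
      continuousOn_const, cfc_mul (fun t : ℝ => t) _ _ continuousOn_id hinv,
      cfc_id' ℝ (star a * a), cfc_const_one ℝ (star a * a), mul_sub, mul_one]
  rw [hfactor, ← Real.sqrt_sq (norm_nonneg _), norm_mul_cfc_star_mul_self_sq a hf]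
  exact Real.sqrt_le_sqrt
    (norm_cfc_le hε.le fun t ht => abs_mul_add_inv_sub_one_mul_self_le (hspec t ht) hε)

lemma mem_closure_range_mul_star_mul_self_mul (a : A) :
    a ∈ closure (Set.range fun b => a * (star a * a * b)) := by
  refine mem_closure_of_tendsto (b := 𝓝[>] (0 : ℝ))
    (f := fun ε => a * (star a * a * cfc (fun t : ℝ => (t + ε)⁻¹) (star a * a))) ?_
    (Eventually.of_forall fun ε => Set.mem_range_self _)
  rw [tendsto_iff_norm_sub_tendsto_zero]
  have hsqrt : Tendsto (fun ε : ℝ => √ε) (𝓝[>] 0) (𝓝 0) := by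
    simpa using (Real.continuous_sqrt.tendsto 0).mono_left nhdsWithin_le_nhds
  exact squeeze_zero' (Eventually.of_forall fun _ => norm_nonneg _)
    (eventually_mem_nhdsWithin.mono fun ε hε => norm_mul_star_mul_self_mul_cfc_sub_le a hε) hsqrt

lemma subset_closure_mul_self {I : Set A} (hI : ∀ a : A, ∀ d ∈ I, a * d ∈ I ∧ d * a ∈ I) :
    I ⊆ closure (I * I) := fun a ha =>
  closure_mono (Set.range_subset_iff.2 fun b =>
    Set.mul_mem_mul ha (hI b _ (hI (star a) a ha).1).2) (mem_closure_range_mul_star_mul_self_mul a)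

end CStarAlgebra

section PartialAction

variable {G R A : Type*} [Group G] [Semiring R] [Semiring A] [Module R A]

lemma inv_apply_apply_of_mem (D : G → Submodule R A) (θ : G → A →ₗ[R] A) (hDe : D 1 = ⊤)
    (hθe : ∀ a, θ 1 a = a)
    (hθcomp : ∀ g h, ∀ a, a ∈ D h⁻¹ → a ∈ D (h⁻¹ * g⁻¹) → θ g (θ h a) = θ (g * h) a)
    (g : G) {a : A} (ha : a ∈ D g⁻¹) : θ g⁻¹ (θ g a) = a := by
  rw [hθcomp g⁻¹ g a ha (by simp [hDe]), inv_mul_cancel, hθe]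

lemma apply_mul_eq_of_kms {M : Type*} [CommMonoid M] (D : G → Submodule R A)
    (θ : G → A →ₗ[R] A) (hDmul : ∀ g, ∀ a : A, ∀ d ∈ D g, a * d ∈ D g)
    (hθmap : ∀ g, ∀ a ∈ D g⁻¹, θ g a ∈ D g)
    (hθmul : ∀ g, ∀ a ∈ D g⁻¹, ∀ b ∈ D g⁻¹, θ g (a * b) = θ g a * θ g b)
    (hinv : ∀ g, ∀ a ∈ D g⁻¹, θ g⁻¹ (θ g a) = a)
    {φ : A → M} (htr : ∀ a b, φ (a * b) = φ (b * a)) {c c' : M} (hc : c * c' = 1) (g : G)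
    (hkms : ∀ a ∈ D g⁻¹, ∀ b ∈ D g, φ (θ g⁻¹ (θ g a * b)) = c' * φ (θ g (θ g⁻¹ b * a)))
    {p q : A} (hp : p ∈ D g⁻¹) (hq : q ∈ D g⁻¹) : φ (θ g (p * q)) = c * φ (p * q) := by
  have hqp : φ (q * p) = c' * φ (θ g (p * q)) := by
    simpa only [← hθmul g q hq p hp, hinv g _ (hDmul _ q p hp), hinv g p hp]
      using hkms q hq (θ g p) (hθmap g p hp)
  rw [← htr, hqp, ← mul_assoc, hc, one_mul]

lemma kms_of_apply_eq {M : Type*} [CommMonoid M] (D : G → Submodule R A)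
    (θ : G → A →ₗ[R] A) (hDmul : ∀ g, ∀ a : A, ∀ d ∈ D g, a * d ∈ D g)
    (hθmap : ∀ g, ∀ a ∈ D g⁻¹, θ g a ∈ D g)
    (hθmul : ∀ g, ∀ a ∈ D g⁻¹, ∀ b ∈ D g⁻¹, θ g (a * b) = θ g a * θ g b)
    (hinv : ∀ g, ∀ a ∈ D g⁻¹, θ g⁻¹ (θ g a) = a)
    {φ : A → M} (htr : ∀ a b, φ (a * b) = φ (b * a)) {c c' : M} (hc : c * c' = 1) (g : G)
    (hscale : ∀ a ∈ D g⁻¹, φ (θ g a) = c * φ a) {a b : A} (ha : a ∈ D g⁻¹) (hb : b ∈ D g) :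
    φ (θ g⁻¹ (θ g a * b)) = c' * φ (θ g (θ g⁻¹ b * a)) := by
  have hfwd : ∀ y ∈ D g, θ g (θ g⁻¹ y) = y := fun y hy => by
    simpa only [inv_inv] using hinv g⁻¹ y (by rwa [inv_inv])
  have hscale_inv : ∀ y ∈ D g, φ (θ g⁻¹ y) = c' * φ y := fun y hy => by
    have h := hscale _ (hθmap g⁻¹ y (by rwa [inv_inv]))
    rw [hfwd y hy] at h
    rw [h, ← mul_assoc, mul_comm c', hc, one_mul]
  have hsplit : θ g⁻¹ b * a = θ g⁻¹ (b * θ g a) := by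
    rw [hθmul g⁻¹ b (by rwa [inv_inv]) (θ g a) (by rw [inv_inv]; exact hθmap g a ha),
      hinv g a ha]
  rw [hscale_inv _ (hDmul g _ b hb), htr, hsplit, hfwd _ (hDmul g b _ (hθmap g a ha))]

end PartialAction

theorem stmt_5_general {G : Type*} [Group G] {A : Type*} [NormedRing A] [StarRing A] [CStarRing A]
    [NormedAlgebra ℂ A] [CompleteSpace A] [StarModule ℂ A]
    (D : G → Submodule ℂ A)
    (hDideal : ∀ g, ∀ a : A, ∀ d ∈ D g, a * d ∈ D g ∧ d * a ∈ D g)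
    (hDe : D 1 = ⊤)
    (θ : G → A →ₗ[ℂ] A)
    (hθe : ∀ a, θ 1 a = a)
    (hθmap : ∀ g, ∀ a ∈ D g⁻¹, θ g a ∈ D g)
    (hθmul : ∀ g, ∀ a ∈ D g⁻¹, ∀ b ∈ D g⁻¹, θ g (a * b) = θ g a * θ g b)
    (hθiso : ∀ g, ∀ a ∈ D g⁻¹, ‖θ g a‖ = ‖a‖)
    (hθcomp : ∀ g h, ∀ a, a ∈ D h⁻¹ → a ∈ D (h⁻¹ * g⁻¹) → θ g (θ h a) = θ (g * h) a)
    (N : G → ℝ) (hNpos : ∀ g, 0 < N g)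
    (β : ℝ)
    (φ : A →L[ℂ] ℂ)
    (g : G) :
    ((∀ a ∈ D g⁻¹, ∀ b ∈ D g,
        φ (θ g⁻¹ (θ g a * b)) = ((((N g) ^ β : ℝ)) : ℂ) * φ (θ g (θ g⁻¹ b * a))) ∧
      (∀ a b : A, φ (a * b) = φ (b * a)))
    ↔ ((∀ a b : A, φ (a * b) = φ (b * a)) ∧
        ∀ a ∈ D g⁻¹, φ (θ g a) = ((((N g) ^ (-β) : ℝ)) : ℂ) * φ a) := by
  let _ : CStarAlgebra A := {}
  have hDmul : ∀ g, ∀ a : A, ∀ d ∈ D g, a * d ∈ D g := fun g a d hd => (hDideal g a d hd).1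
  have hinv : ∀ g, ∀ a ∈ D g⁻¹, θ g⁻¹ (θ g a) = a := fun g _ =>
    inv_apply_apply_of_mem D θ hDe hθe hθcomp g
  have hc : ((N g ^ (-β) : ℝ) : ℂ) * ((N g ^ β : ℝ) : ℂ) = 1 := by
    rw [← Complex.ofReal_mul, ← Real.rpow_add (hNpos g), neg_add_cancel, Real.rpow_zero,
      Complex.ofReal_one]
  constructor
  · rintro ⟨hkms, htr⟩
    refine ⟨htr, fun a ha => Set.EqOn.of_subset_closure (f := fun a => φ (θ g a))
      (g := fun a => _ * φ a) (s := (D g⁻¹ : Set A) * (D g⁻¹ : Set A)) ?_ ?_ ?_ ?_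
      (subset_closure_mul_self (hDideal g⁻¹)) ha⟩
    · rintro _ ⟨p, hp, q, hq, rfl⟩
      exact apply_mul_eq_of_kms D θ hDmul hθmap hθmul hinv htr hc g hkms hp hq
    · exact φ.continuous.comp_continuousOn ((θ g).continuousOn_of_forall_norm_map_eq (hθiso g))
    · fun_prop
    · rintro _ ⟨p, -, q, hq, rfl⟩
      exact hDmul _ p q hq
  · rintro ⟨htr, hscale⟩
    exact ⟨fun a ha b hb => kms_of_apply_eq D θ hDmul hθmap hθmul hinv htr hc g hscale ha hb, htr⟩

/-- Let `Θ = ({D_g},{θ_g})` be a partial action of a discrete group `G` on a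
C*-algebra `A` and `β ∈ (0,∞)`.  In the crossed product grading `B_g = D_g δ_g`, a state `φ`
on `A` satisfies `φ(ab) = N(g)^β φ(ba)` for all `a ∈ B_{g⁻¹}`, `b ∈ B_g` — concretely
`φ(θ_{g⁻¹}(θ_g(a)b)) = N(g)^β φ(θ_g(θ_{g⁻¹}(b)a))` for `a ∈ D_{g⁻¹}`, `b ∈ D_g` —
for the fixed `g` and also for `g = e` (the latter being the trace property),
if and only if `φ` is a trace and `φ(θ_g(a)) = N(g)^{-β} φ(a)` for all `a ∈ D_{g⁻¹}`. -/
theorem stmt_5 {G : Type*} [Group G] {A : Type*} [NormedRing A] [StarRing A] [CStarRing A]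
    [NormedAlgebra ℂ A] [CompleteSpace A] [StarModule ℂ A]
    (D : G → Submodule ℂ A)
    (hDclosed : ∀ g, IsClosed (D g : Set A))
    (hDideal : ∀ g, ∀ a : A, ∀ d ∈ D g, a * d ∈ D g ∧ d * a ∈ D g)
    (hDstar : ∀ g, ∀ d ∈ D g, star d ∈ D g)
    (hDe : D 1 = ⊤)
    (θ : G → A →ₗ[ℂ] A)
    (hθe : ∀ a, θ 1 a = a)
    (hθmap : ∀ g, ∀ a ∈ D g⁻¹, θ g a ∈ D g)
    (hθmul : ∀ g, ∀ a ∈ D g⁻¹, ∀ b ∈ D g⁻¹, θ g (a * b) = θ g a * θ g b)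
    (hθstar : ∀ g, ∀ a ∈ D g⁻¹, θ g (star a) = star (θ g a))
    (hθiso : ∀ g, ∀ a ∈ D g⁻¹, ‖θ g a‖ = ‖a‖)
    (hθdom : ∀ g h, (D g⁻¹ ⊓ D h).map (θ g) = D g ⊓ D (g * h))
    (hθcomp : ∀ g h, ∀ a, a ∈ D h⁻¹ → a ∈ D (h⁻¹ * g⁻¹) → θ g (θ h a) = θ (g * h) a)
    (N : G → ℝ) (hNpos : ∀ g, 0 < N g) (hNmul : ∀ g h, N (g * h) = N g * N h)
    (β : ℝ) (hβ : 0 < β)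
    (φ : A →L[ℂ] ℂ) (hφnorm : ‖φ‖ = 1)
    (hφpos : ∀ a : A, 0 ≤ (φ (star a * a)).re ∧ (φ (star a * a)).im = 0)
    (g : G) :
    ((∀ a ∈ D g⁻¹, ∀ b ∈ D g,
        φ (θ g⁻¹ (θ g a * b)) = ((((N g) ^ β : ℝ)) : ℂ) * φ (θ g (θ g⁻¹ b * a))) ∧
      (∀ a b : A, φ (a * b) = φ (b * a)))
    ↔ ((∀ a b : A, φ (a * b) = φ (b * a)) ∧
        ∀ a ∈ D g⁻¹, φ (θ g a) = ((((N g) ^ (-β) : ℝ)) : ℂ) * φ a) :=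
  stmt_5_general D hDideal hDe θ hθe hθmap hθmul hθiso hθcomp N hNpos β φ g
end

section
/- In the free group 𝔽 on a set 𝒢 of generators, let g ∈ 𝔽 be such that g cannot be written as g = μν⁻¹ with μ, ν in the positive cone 𝔽₊ and |g| = |μ| + |ν|. If {B_g} is a semi-saturated and orthogonal grading of a C*-algebra B over 𝔽, then B_g = {0}. -/
open scoped Pointwise

/-!
If the reduced word of `g` never has a letter `x⁻¹` immediately followed by a letter `y`, it is a
positive word followed by the inverse of a positive word, i.e. `g = μ ν⁻¹` without cancellation.
Otherwise `g = (p x⁻¹)(y q)` without cancellation, and `x ≠ y` because the word is reduced.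
Semi-saturation makes `B_g`, `B_{p x⁻¹}` and `B_{y q}` the closed spans of `B_{p x⁻¹} B_{y q}`,
`B_p B_{x⁻¹}` and `B_y B_q`. As `B_{x⁻¹} = B_x^*` and `B_x^* B_y = 0`, the products
`B_{x⁻¹} B_{y q}`, then `B_{p x⁻¹} B_{y q}`, and finally `B_g` vanish.
-/

theorem List.IsChain.eq_false_of_mem_dropWhile {β : Type*} {p : β → Bool} {L : List β}
    (h : L.IsChain fun a b => p a = false → p b = false) :
    ∀ a ∈ L.dropWhile p, p a = false :=
  (h.suffix (List.dropWhile_suffix p)).induction _ _ (fun _ _ hab ha => hab ha)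
    (List.head_dropWhile_not p)

namespace FreeGroup

variable {α : Type*}

theorem mk_mem_closure_range_of {L : List (α × Bool)} (h : ∀ a ∈ L, a.2 = true) :
    mk L ∈ Submonoid.closure (Set.range (of : α → FreeGroup α)) := by
  induction L with
  | nil => exact one_mem _
  | cons a L ih =>
    obtain ⟨x, b⟩ := a
    obtain rfl : b = true := h _ List.mem_cons_self
    rw [← List.singleton_append, ← mul_mk]
    exact mul_mem (Submonoid.subset_closure ⟨x, rfl⟩)
      (ih fun a ha => h a (List.mem_cons_of_mem _ ha))

variable [DecidableEq α]

theorem toWord_mk_of_isReduced {L : List (α × Bool)} (h : IsReduced L) : (mk L).toWord = L := by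
  rw [toWord_mk, h.reduce_eq]

theorem length_toWord_mk_mul_mk {L₁ L₂ : List (α × Bool)} (h : IsReduced (L₁ ++ L₂)) :
    (mk L₁ * mk L₂).toWord.length = (mk L₁).toWord.length + (mk L₂).toWord.length := by
  rw [mul_mk, toWord_mk_of_isReduced h,
    toWord_mk_of_isReduced (h.infix (List.prefix_append _ _).isInfix),
    toWord_mk_of_isReduced (h.infix (List.suffix_append _ _).isInfix), List.length_append]

theorem exists_mem_closure_mul_inv_of_isChain {g : FreeGroup α}
    (h : g.toWord.IsChain fun a b => a.2 = false → b.2 = false) :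
    ∃ μ ν : FreeGroup α,
      μ ∈ Submonoid.closure (Set.range (of : α → FreeGroup α)) ∧
      ν ∈ Submonoid.closure (Set.range (of : α → FreeGroup α)) ∧
      g = μ * ν⁻¹ ∧ g.toWord.length = μ.toWord.length + ν.toWord.length := by
  set A := g.toWord.takeWhile (·.2)
  set D := g.toWord.dropWhile (·.2)
  have hAD : A ++ D = g.toWord := List.takeWhile_append_dropWhile
  have hD : ∀ a ∈ D, a.2 = false := h.eq_false_of_mem_dropWhile
  have hν : (mk (invRev D))⁻¹ = mk D := by rw [inv_mk, invRev_invRev]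
  refine ⟨mk A, mk (invRev D), mk_mem_closure_range_of fun a ha => List.mem_takeWhile_imp ha,
    mk_mem_closure_range_of ?_, ?_, ?_⟩
  · simp only [invRev, List.mem_reverse, List.mem_map]
    rintro _ ⟨a, ha, rfl⟩
    simp [hD a ha]
  · rw [hν, mul_mk, hAD, mk_toWord]
  · have hlen : (mk (invRev D)).toWord.length = (mk D).toWord.length := by
      rw [← hν, toWord_inv, invRev_length]
    rw [hlen, ← length_toWord_mk_mul_mk (hAD ▸ isReduced_toWord), mul_mk, hAD, mk_toWord]

theorem exists_eq_mul_of_inv_mul_of_mul_of_not_isChain {g : FreeGroup α}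
    (h : ¬ g.toWord.IsChain fun a b => a.2 = false → b.2 = false) :
    ∃ (p q : FreeGroup α) (x y : α), x ≠ y ∧ g = p * (of x)⁻¹ * (of y * q) ∧
      (p * (of x)⁻¹).toWord.length = p.toWord.length + (of x)⁻¹.toWord.length ∧
      (of y * q).toWord.length = (of y).toWord.length + q.toWord.length ∧
      (p * (of x)⁻¹ * (of y * q)).toWord.length =
        (p * (of x)⁻¹).toWord.length + (of y * q).toWord.length := by
  simp only [List.isChain_iff_forall_rel_of_append_cons_cons, not_forall] at h
  obtain ⟨⟨x, b₁⟩, ⟨y, b₂⟩, l₁, l₂, hw, hdesc⟩ := h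
  obtain ⟨rfl, rfl⟩ : b₁ = false ∧ b₂ = true := by simpa using hdesc
  have hred : IsReduced ((l₁ ++ [(x, false)]) ++ ([(y, true)] ++ l₂)) := by
    simpa [hw] using (isReduced_toWord (x := g))
  refine ⟨mk l₁, mk l₂, x, y, ?_, ?_, ?_, ?_, ?_⟩
  · rintro rfl
    have := hred.infix (L₁ := [(x, false), (x, true)]) ⟨l₁, l₂, by simp⟩
    simp [isReduced_cons_cons] at this
  · change g = mk l₁ * mk [(x, false)] * (mk [(y, true)] * mk l₂)
    rw [mul_mk, mul_mk, mul_mk, ← mk_toWord (x := g), hw]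
    simp
  · exact length_toWord_mk_mul_mk (hred.infix (List.prefix_append _ _).isInfix)
  · exact length_toWord_mk_mul_mk (hred.infix (List.suffix_append _ _).isInfix)
  · change (mk l₁ * mk [(x, false)] * (mk [(y, true)] * mk l₂)).toWord.length = _
    rw [mul_mk, mul_mk]
    exact length_toWord_mk_mul_mk hred

end FreeGroup

section TopologicalClosureSpanMul

variable {R A : Type*} [Semiring R] [NonUnitalSemiring A] [Module R A] [TopologicalSpace A]
  [ContinuousAdd A] [ContinuousConstSMul R A] [T1Space A] {X Y : Set A}

theorem topologicalClosure_span_mul_eq_bot (h : ∀ x ∈ X, ∀ y ∈ Y, x * y = 0) :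
    (Submodule.span R (X * Y)).topologicalClosure = ⊥ := by
  refine eq_bot_iff.2 (Submodule.topologicalClosure_minimal _ (Submodule.span_le.2 ?_) ?_)
  · rintro _ ⟨x, hx, y, hy, rfl⟩
    exact h x hx y hy
  · simp

theorem mul_eq_zero_of_mem_topologicalClosure_span_mul_left [SMulCommClass R A A]
    [ContinuousMul A] {u v : A} (hX : ∀ x ∈ X, u * x = 0)
    (hv : v ∈ (Submodule.span R (X * Y)).topologicalClosure) : u * v = 0 := by
  refine Submodule.topologicalClosure_minimal (t := LinearMap.ker (LinearMap.mulLeft R u)) _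
    (Submodule.span_le.2 ?_) (isClosed_singleton.preimage (continuous_const_mul u)) hv
  rintro _ ⟨x, hx, y, -, rfl⟩
  simp [← mul_assoc, hX x hx]

theorem mul_eq_zero_of_mem_topologicalClosure_span_mul_right [IsScalarTower R A A]
    [ContinuousMul A] {u v : A} (hY : ∀ y ∈ Y, y * v = 0)
    (hu : u ∈ (Submodule.span R (X * Y)).topologicalClosure) : u * v = 0 := by
  refine Submodule.topologicalClosure_minimal (t := LinearMap.ker (LinearMap.mulRight R v)) _
    (Submodule.span_le.2 ?_) (isClosed_singleton.preimage (continuous_mul_const v)) hu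
  rintro _ ⟨x, -, y, hy, rfl⟩
  simp [mul_assoc, hY y hy]

end TopologicalClosureSpanMul

theorem stmt_6_general {𝒢 : Type*} [DecidableEq 𝒢] {B : Type*} [NormedRing B] [StarRing B]
    [NormedAlgebra ℂ B]
    (Bg : FreeGroup 𝒢 → Submodule ℂ B)
    (hstar : ∀ g, ∀ a ∈ Bg g, star a ∈ Bg g⁻¹)
    -- semi-saturated: `B_{gh}` is the closed span of `B_g B_h` when `|gh| = |g| + |h|`
    (hss : ∀ g h : FreeGroup 𝒢,
      (g * h).toWord.length = g.toWord.length + h.toWord.length →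
      Bg (g * h) = (Submodule.span ℂ ((Bg g : Set B) * (Bg h : Set B))).topologicalClosure)
    -- orthogonal: `B_x* B_y = 0` for distinct generators
    (horth : ∀ x y : 𝒢, x ≠ y →
      ∀ a ∈ Bg (FreeGroup.of x), ∀ b ∈ Bg (FreeGroup.of y), star a * b = 0)
    (g : FreeGroup 𝒢)
    (hg : ¬ ∃ μ ν : FreeGroup 𝒢,
      μ ∈ Submonoid.closure (Set.range (FreeGroup.of : 𝒢 → FreeGroup 𝒢)) ∧
      ν ∈ Submonoid.closure (Set.range (FreeGroup.of : 𝒢 → FreeGroup 𝒢)) ∧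
      g = μ * ν⁻¹ ∧ g.toWord.length = μ.toWord.length + ν.toWord.length) :
    Bg g = ⊥ := by
  by_cases hchain : g.toWord.IsChain fun a b => a.2 = false → b.2 = false
  · exact absurd (FreeGroup.exists_mem_closure_mul_inv_of_isChain hchain) hg
  obtain ⟨p, q, x, y, hxy, rfl, hpx, hyq, hpxyq⟩ :=
    FreeGroup.exists_eq_mul_of_inv_mul_of_mul_of_not_isChain hchain
  have h₁ : ∀ u ∈ Bg (FreeGroup.of x)⁻¹, ∀ v ∈ Bg (FreeGroup.of y), u * v = 0 :=
    fun u hu v hv => by simpa using horth x y hxy (star u) (by simpa using hstar _ u hu) v hv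
  have h₂ : ∀ u ∈ Bg (FreeGroup.of x)⁻¹, ∀ v ∈ Bg (FreeGroup.of y * q), u * v = 0 :=
    fun u hu v hv =>
      mul_eq_zero_of_mem_topologicalClosure_span_mul_left (h₁ u hu) (hss _ _ hyq ▸ hv)
  have h₃ : ∀ u ∈ Bg (p * (FreeGroup.of x)⁻¹), ∀ v ∈ Bg (FreeGroup.of y * q), u * v = 0 :=
    fun u hu v hv =>
      mul_eq_zero_of_mem_topologicalClosure_span_mul_right (fun w hw => h₂ w hw v hv)
        (hss _ _ hpx ▸ hu)
  rw [hss _ _ hpxyq]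
  exact topologicalClosure_span_mul_eq_bot h₃

/-- Let `𝔽` be the free group on a set `𝒢` of generators, with word
length `|g| = (toWord g).length` and positive cone `𝔽₊` the submonoid generated by the
generators.  If `{B_g}` is a semi-saturated and orthogonal grading of a C*-algebra `B`
over `𝔽`, and `g ∈ 𝔽` cannot be written as `g = μ ν⁻¹` with `μ, ν ∈ 𝔽₊` and
`|g| = |μ| + |ν|`, then `B_g = {0}`. -/
theorem stmt_6 {𝒢 : Type*} [DecidableEq 𝒢] {B : Type*} [NormedRing B] [StarRing B]
    [CStarRing B] [NormedAlgebra ℂ B] [CompleteSpace B] [StarModule ℂ B]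
    (Bg : FreeGroup 𝒢 → Submodule ℂ B)
    (hclosed : ∀ g, IsClosed (Bg g : Set B))
    (hmul : ∀ g h, ∀ a ∈ Bg g, ∀ b ∈ Bg h, a * b ∈ Bg (g * h))
    (hstar : ∀ g, ∀ a ∈ Bg g, star a ∈ Bg g⁻¹)
    (hindep : iSupIndep Bg)
    (hdense : (⨆ g, Bg g).topologicalClosure = ⊤)
    -- semi-saturated: `B_{gh}` is the closed span of `B_g B_h` when `|gh| = |g| + |h|`
    (hss : ∀ g h : FreeGroup 𝒢,
      (g * h).toWord.length = g.toWord.length + h.toWord.length →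
      Bg (g * h) = (Submodule.span ℂ ((Bg g : Set B) * (Bg h : Set B))).topologicalClosure)
    -- orthogonal: `B_x* B_y = 0` for distinct generators
    (horth : ∀ x y : 𝒢, x ≠ y →
      ∀ a ∈ Bg (FreeGroup.of x), ∀ b ∈ Bg (FreeGroup.of y), star a * b = 0)
    (g : FreeGroup 𝒢)
    (hg : ¬ ∃ μ ν : FreeGroup 𝒢,
      μ ∈ Submonoid.closure (Set.range (FreeGroup.of : 𝒢 → FreeGroup 𝒢)) ∧
      ν ∈ Submonoid.closure (Set.range (FreeGroup.of : 𝒢 → FreeGroup 𝒢)) ∧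
      g = μ * ν⁻¹ ∧ g.toWord.length = μ.toWord.length + ν.toWord.length) :
    Bg g = ⊥ :=
  stmt_6_general Bg hstar hss horth g hg
end

section
/- Let A be a 0–1 matrix over a countable set 𝒢, N : 𝒢 → (1,∞), and suppose there is an admissible word ν beginning in x and ending in y. Then for every β ∈ (0,∞), Z_x(β) ≤ N(x⁻¹ν)^β Z_y(β), where Z_x(β) = Σ_{μ ∈ P_A^x} N(μ)^{-β} is the sum over admissible words μ ending in x, and N(x⁻¹ν) = N(ν)/N(x). -/
lemma list_prod_rpow {α : Type*} (N : α → ℝ) (hN : ∀ z, 0 ≤ N z) (r : ℝ) :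
    ∀ l : List α, (l.map fun z => (N z) ^ r).prod = (l.map N).prod ^ r
  | [] => by simp
  | a :: l => by
    have hp : 0 ≤ (l.map N).prod := List.prod_nonneg (by simp; intro b _; exact hN b)
    simp [list_prod_rpow N hN r l, Real.mul_rpow (hN a) hp]

/-- Let `A` be a 0–1 matrix over a countable set `𝒢`, `N : 𝒢 → (1,∞)`,
and suppose there is an admissible word `ν` beginning in `x` and ending in `y`.  Then for
every `β ∈ (0,∞)`, `Z_x(β) ≤ N(x⁻¹ν)^β Z_y(β)`, where `Z_x(β) = Σ_{μ ∈ P_A^x} N(μ)^{-β}`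
is the sum over admissible words ending in `x`, and `N(x⁻¹ν) = N(ν)/N(x)`. -/
theorem stmt_10 {𝒢 : Type*} [Countable 𝒢] (A : 𝒢 → 𝒢 → Bool)
    (N : 𝒢 → ℝ) (hN : ∀ x, 1 < N x)
    (x y : 𝒢) (ν : List 𝒢) (hν : ν.Chain' fun a b => A a b = true)
    (hνhead : ν.head? = some x) (hνlast : ν.getLast? = some y)
    (β : ℝ) (hβ : 0 < β) :
    (∑' μ : {μ : List 𝒢 // (μ.Chain' fun a b => A a b = true) ∧ μ.getLast? = some x},
        ENNReal.ofReal ((μ.1.map fun z => (N z) ^ (-β)).prod))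
      ≤ ENNReal.ofReal (((ν.map N).prod / N x) ^ β) *
        ∑' μ : {μ : List 𝒢 // (μ.Chain' fun a b => A a b = true) ∧ μ.getLast? = some y},
          ENNReal.ofReal ((μ.1.map fun z => (N z) ^ (-β)).prod) := by
  have hN0 : ∀ z, 0 ≤ N z := fun z => le_of_lt (lt_trans one_pos (hN z))
  -- ν = x :: t
  obtain ⟨t, rfl⟩ : ∃ t, ν = x :: t := by
    cases ν with
    | nil => simp at hνhead
    | cons a t =>
      obtain rfl : a = x := by simpa using hνhead
      exact ⟨t, rfl⟩
  set c : ℝ := (t.map N).prod with hc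
  have hcpos : 0 < c := List.prod_pos (by simp; intro b _; exact lt_trans one_pos (hN b))
  have hdiv : ((x :: t).map N).prod / N x = c := by
    simp only [List.map_cons, List.prod_cons, hc]
    exact mul_div_cancel_left₀ _ (ne_of_gt (lt_trans one_pos (hN x)))
  rw [hdiv]
  -- the injective map
  have hchain_t : t.Chain' fun a b => A a b = true := hν.tail
  have hrel : ∀ b ∈ t.head?, A x b = true := (List.isChain_cons.mp hν).1
  set f : {μ : List 𝒢 // (μ.Chain' fun a b => A a b = true) ∧ μ.getLast? = some x} →
      {μ : List 𝒢 // (μ.Chain' fun a b => A a b = true) ∧ μ.getLast? = some y} :=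
    fun μ => ⟨μ.1 ++ t, by
      constructor
      · exact List.IsChain.append μ.2.1 hchain_t (by
          intro a ha b hb
          rw [μ.2.2] at ha
          simp at ha
          subst ha
          exact hrel b hb)
      · cases t with
        | nil =>
          have : x = y := by simpa using hνlast
          simpa [this] using μ.2.2
        | cons b t' =>
          rw [List.getLast?_append_of_ne_nil _ (by simp)]
          simpa using hνlast⟩ with hf
  have hinj : Function.Injective f := by
    intro a b hab
    have := congrArg Subtype.val hab
    simp only [hf] at this
    exact Subtype.ext (List.append_cancel_right this)
  -- weight identity
  have hweight : ∀ μ : {μ : List 𝒢 // (μ.Chain' fun a b => A a b = true) ∧ μ.getLast? = some x},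
      ENNReal.ofReal ((μ.1.map fun z => (N z) ^ (-β)).prod)
        = ENNReal.ofReal (c ^ β) *
          ENNReal.ofReal (((f μ).1.map fun z => (N z) ^ (-β)).prod) := by
    intro μ
    rw [← ENNReal.ofReal_mul (Real.rpow_nonneg hcpos.le β)]
    congr 1
    simp only [hf, List.map_append, List.prod_append]
    rw [list_prod_rpow N hN0 (-β) t, ← hc, ← mul_assoc, mul_comm (c ^ β),
      mul_assoc]
    rw [← Real.rpow_add hcpos]
    simp
  rw [tsum_congr hweight, ENNReal.tsum_mul_left]
  exact mul_le_mul_right (ENNReal.tsum_comp_le_tsum_of_injective hinj _) _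
end

section
/- Let A be a 0–1 matrix over countable 𝒢, N : 𝒢 → (1,∞), and suppose there exist admissible words ν from x₁ to x₂ and γ from y₂ to y₁. Then for all β ∈ (0,∞), Z_{x₂y₂}(β) ≤ K · Z_{x₁y₁}(β) with K = N(νγ)^β N(x₂y₂)^{-β}, where Z_{xy}(β) = Σ_{μ ∈ P_A^{xy}} N(μ)^{-β} is the sum over admissible words beginning in x and ending in y. -/
open List

private lemma head?_eq_cons {α : Type*} {l : List α} {a : α} (h : l.head? = some a) :
    ∃ t, l = a :: t := by
  cases l with
  | nil => simp at h
  | cons b t =>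
    have : b = a := by simpa using h
    exact ⟨t, by rw [this]⟩

private lemma glue_spec {α : Type*} {R : α → α → Prop} {p q : List α} {z : α}
    (hp : p.Chain' R) (hq : q.Chain' R)
    (hpl : p.getLast? = some z) (hqh : q.head? = some z) :
    (p ++ q.tail).Chain' R ∧ (p ++ q.tail).head? = p.head? ∧
      (p ++ q.tail).getLast? = q.getLast? := by
  obtain ⟨t, rfl⟩ := head?_eq_cons hqh
  have hp0 : p ≠ [] := by rintro rfl; simp at hpl
  refine ⟨?_, ?_, ?_⟩
  · rw [List.tail_cons, List.Chain', List.isChain_append]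
    refine ⟨hp, List.IsChain.tail hq, ?_⟩
    intro x hx y hy
    rw [hpl] at hx
    simp only [Option.mem_def, Option.some.injEq] at hx
    subst hx
    exact (List.isChain_cons.1 hq).1 y hy
  · rw [List.tail_cons, List.head?_append_of_ne_nil _ hp0]
  · cases t with
    | nil => simpa using hpl
    | cons c t' =>
      rw [List.tail_cons, List.getLast?_append_cons, List.getLast?_cons_cons]

private lemma glue_prod {α : Type*} (f : α → ℝ) (p : List α) {q : List α} {z : α}
    (hqh : q.head? = some z) (hz : f z ≠ 0) :
    ((p ++ q.tail).map f).prod = (p.map f).prod * ((q.map f).prod / f z) := by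
  obtain ⟨t, rfl⟩ := head?_eq_cons hqh
  simp only [List.tail_cons, List.map_append, List.prod_append, List.map_cons,
    List.prod_cons]
  field_simp

private lemma rpow_aux (pν pγ pμ nx ny β : ℝ) (hpν : 0 < pν) (hpγ : 0 < pγ)
    (hnx : 0 < nx) (hny : 0 < ny) :
    pμ = (pν * pγ / (nx * ny)) ^ β *
      (pν ^ (-β) * (pμ * (pγ ^ (-β) / ny ^ (-β)) / nx ^ (-β))) := by
  rw [Real.div_rpow (mul_pos hpν hpγ).le (mul_pos hnx hny).le,
    Real.mul_rpow hpν.le hpγ.le, Real.mul_rpow hnx.le hny.le,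
    Real.rpow_neg hpν.le, Real.rpow_neg hpγ.le, Real.rpow_neg hnx.le,
    Real.rpow_neg hny.le]
  have h1 : pν ^ β ≠ 0 := (Real.rpow_pos_of_pos hpν β).ne'
  have h2 : pγ ^ β ≠ 0 := (Real.rpow_pos_of_pos hpγ β).ne'
  have h3 : nx ^ β ≠ 0 := (Real.rpow_pos_of_pos hnx β).ne'
  have h4 : ny ^ β ≠ 0 := (Real.rpow_pos_of_pos hny β).ne'
  field_simp

/-- Let `A` be a 0–1 matrix over countable `𝒢`, `N : 𝒢 → (1,∞)`, and
suppose there are admissible words `ν` from `x₁` to `x₂` and `γ` from `y₂` to `y₁`.  Then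
for all `β ∈ (0,∞)`, `Z_{x₂y₂}(β) ≤ K · Z_{x₁y₁}(β)` with
`K = N(νγ)^β N(x₂y₂)^{-β} = (N(ν)N(γ)/(N(x₂)N(y₂)))^β`, where
`Z_{xy}(β) = Σ_{μ ∈ P_A^{xy}} N(μ)^{-β}` is summed over admissible words beginning in `x`
and ending in `y`. -/
theorem stmt_12 {𝒢 : Type*} [Countable 𝒢] (A : 𝒢 → 𝒢 → Bool)
    (N : 𝒢 → ℝ) (hN : ∀ x, 1 < N x)
    (x₁ x₂ y₁ y₂ : 𝒢) (ν γ : List 𝒢)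
    (hν : ν.Chain' fun a b => A a b = true)
    (hνhead : ν.head? = some x₁) (hνlast : ν.getLast? = some x₂)
    (hγ : γ.Chain' fun a b => A a b = true)
    (hγhead : γ.head? = some y₂) (hγlast : γ.getLast? = some y₁)
    (β : ℝ) (hβ : 0 < β) :
    (∑' μ : {μ : List 𝒢 // (μ.Chain' fun a b => A a b = true) ∧
        μ.head? = some x₂ ∧ μ.getLast? = some y₂},
      ENNReal.ofReal ((μ.1.map fun z => (N z) ^ (-β)).prod))
    ≤ ENNReal.ofReal ((((ν.map N).prod * (γ.map N).prod) / (N x₂ * N y₂)) ^ β) *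
      ∑' μ : {μ : List 𝒢 // (μ.Chain' fun a b => A a b = true) ∧
          μ.head? = some x₁ ∧ μ.getLast? = some y₁},
        ENNReal.ofReal ((μ.1.map fun z => (N z) ^ (-β)).prod) := by
  classical
  have hNpos : ∀ z, (0:ℝ) < N z := fun z => lt_trans one_pos (hN z)
  set g : 𝒢 → ℝ := fun z => N z ^ (-β) with hg
  have hgpos : ∀ z, 0 < g z := fun z => Real.rpow_pos_of_pos (hNpos z) _
  have prodpos : ∀ l : List 𝒢, 0 < (l.map N).prod := by
    intro l
    apply List.prod_pos
    intro x hx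
    obtain ⟨z, _, rfl⟩ := List.mem_map.1 hx
    exact hNpos z
  set a : ℝ := ((ν.map N).prod * (γ.map N).prod) / (N x₂ * N y₂) with ha
  have hapos : 0 < a := div_pos (mul_pos (prodpos ν) (prodpos γ))
    (mul_pos (hNpos x₂) (hNpos y₂))
  have hPg : ∀ l : List 𝒢, (l.map g).prod = (l.map N).prod ^ (-β) := fun l =>
    Real.list_prod_map_rpow' l N (fun i _ => (hNpos i).le) (-β)
  set T₂ := {μ : List 𝒢 // (μ.Chain' fun a b => A a b = true) ∧
      μ.head? = some x₂ ∧ μ.getLast? = some y₂}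
  set T₁ := {μ : List 𝒢 // (μ.Chain' fun a b => A a b = true) ∧
      μ.head? = some x₁ ∧ μ.getLast? = some y₁}
  have Fprop : ∀ μ : T₂, ((ν ++ (μ.1 ++ γ.tail).tail).Chain' fun a b => A a b = true) ∧
      (ν ++ (μ.1 ++ γ.tail).tail).head? = some x₁ ∧
      (ν ++ (μ.1 ++ γ.tail).tail).getLast? = some y₁ := by
    rintro ⟨μ, hc, hh, hl⟩
    have inner := glue_spec hc hγ hl hγhead
    have hqh : (μ ++ γ.tail).head? = some x₂ := by rw [inner.2.1, hh]
    have outer := glue_spec hν inner.1 hνlast hqh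
    exact ⟨outer.1, by rw [outer.2.1, hνhead], by rw [outer.2.2, inner.2.2, hγlast]⟩
  set F : T₂ → T₁ := fun μ => ⟨ν ++ (μ.1 ++ γ.tail).tail, Fprop μ⟩ with hF
  have hinj : Function.Injective F := by
    rintro ⟨μ, hc, hh, hl⟩ ⟨μ', hc', hh', hl'⟩ h
    have h' : ν ++ (μ ++ γ.tail).tail = ν ++ (μ' ++ γ.tail).tail :=
      congrArg Subtype.val h
    have h2 := List.append_cancel_left h'
    obtain ⟨m, rfl⟩ := head?_eq_cons hh
    obtain ⟨m', rfl⟩ := head?_eq_cons hh'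
    simp only [List.cons_append, List.tail_cons] at h2
    have h3 := List.append_cancel_right h2
    exact Subtype.ext (show x₂ :: m = x₂ :: m' by rw [h3])
  have key : ∀ μ : T₂, ENNReal.ofReal ((μ.1.map g).prod) =
      ENNReal.ofReal (a ^ β) * ENNReal.ofReal (((F μ).1.map g).prod) := by
    rintro ⟨μ, hc, hh, hl⟩
    have hqh : (μ ++ γ.tail).head? = some x₂ := by
      rw [(glue_spec hc hγ hl hγhead).2.1, hh]
    have e1 : (((ν ++ (μ ++ γ.tail).tail)).map g).prod
        = (ν.map g).prod * (((μ ++ γ.tail).map g).prod / g x₂) :=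
      glue_prod g ν hqh (hgpos x₂).ne'
    have e2 : ((μ ++ γ.tail).map g).prod = (μ.map g).prod * ((γ.map g).prod / g y₂) :=
      glue_prod g μ hγhead (hgpos y₂).ne'
    rw [← ENNReal.ofReal_mul (Real.rpow_nonneg hapos.le _)]
    congr 1
    show (μ.map g).prod = a ^ β * ((ν ++ (μ ++ γ.tail).tail).map g).prod
    rw [e1, e2, hPg ν, hPg γ, ha]
    exact rpow_aux _ _ _ _ _ β (prodpos ν) (prodpos γ) (hNpos x₂) (hNpos y₂)
  calc (∑' μ : T₂, ENNReal.ofReal ((μ.1.map g).prod))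
      = ∑' μ : T₂, ENNReal.ofReal (a ^ β) * ENNReal.ofReal (((F μ).1.map g).prod) :=
        tsum_congr key
    _ = ENNReal.ofReal (a ^ β) * ∑' μ : T₂, ENNReal.ofReal (((F μ).1.map g).prod) :=
        ENNReal.tsum_mul_left
    _ ≤ ENNReal.ofReal (a ^ β) * ∑' w : T₁, ENNReal.ofReal ((w.1.map g).prod) :=
        mul_le_mul_right (ENNReal.tsum_comp_le_tsum_of_injective hinj
          (fun w => ENNReal.ofReal ((w.1.map g).prod))) _
end

section
/- Let B be a unital C*-algebra, I a closed two-sided ideal, A a sub-C*-algebra with 1 ∈ A and B = A + I. Let φ be a state on A and ψ a positive linear functional on I, with canonical extension ψ̃ to B. If φ ≥ ψ̃ on A and φ = ψ on A ∩ I, then there exists a state ρ on B with ρ|_A = φ and ρ|_I = ψ. -/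
lemma aux_star_mem_closed_ideal {B : Type*} [CStarAlgebra B] [PartialOrder B]
    [StarOrderedRing B]
    (I : Submodule ℂ B) (hIclosed : IsClosed (I : Set B))
    (hIideal : ∀ b : B, ∀ x ∈ I, b * x ∈ I ∧ x * b ∈ I) :
    ∀ x ∈ I, star x ∈ I := by
  intro x hx
  rcases subsingleton_or_nontrivial B with hB | hB
  · have : star x = x := Subsingleton.elim _ _
    rwa [this]
  have hhI : x * star x ∈ I := (hIideal (star x) x hx).2
  have hh0 : (0 : B) ≤ x * star x := mul_star_self_nonneg x
  have hmem : star x ∈ closure (I : Set B) → star x ∈ I := by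
    rw [hIclosed.closure_eq]; exact id
  apply hmem
  rw [Metric.mem_closure_iff]
  intro ε hε
  obtain ⟨n, hn⟩ := exists_nat_gt (ε ^ 2)⁻¹
  have hcI : (n + 1) • (x * star x) ∈ I := nsmul_mem hhI (n + 1)
  have hc0 : (0 : B) ≤ (n + 1) • (x * star x) := nsmul_nonneg hh0 (n + 1)
  have hdu : IsUnit (1 + (n + 1) • (x * star x)) :=
    CStarAlgebra.isUnit_of_le 1 (le_add_of_nonneg_right hc0)
  obtain ⟨u, hu⟩ := hdu
  have hcd : (n + 1) • (x * star x) ≤ (u : B) := by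
    rw [hu]; exact le_add_of_nonneg_left zero_le_one
  have hd1 : (1 : B) ≤ (u : B) := by rw [hu]; exact le_add_of_nonneg_right hc0
  have hv0 : (0 : B) ≤ (↑u⁻¹ : B) := CFC.inv_nonneg_of_nonneg u (zero_le_one.trans hd1)
  have hvsa : IsSelfAdjoint (↑u⁻¹ : B) := IsSelfAdjoint.of_nonneg hv0
  have hv1 : (↑u⁻¹ : B) ≤ 1 := by
    have := CStarAlgebra.inv_le_inv (a := 1) (b := u) (by simp) (by simpa using hd1)
    simpa using this
  -- the approximating element
  have hyI : star x * ((n + 1) • (x * star x) * (↑u⁻¹ : B)) ∈ I :=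
    (hIideal (star x) _ ((hIideal (↑u⁻¹ : B) _ hcI).2)).1
  -- the error is `star x * ↑u⁻¹`
  have hcv : (n + 1) • (x * star x) * (↑u⁻¹ : B) = 1 - (↑u⁻¹ : B) := by
    have h1 : (u : B) * (↑u⁻¹ : B) = 1 := u.mul_inv
    have h2 : (n + 1) • (x * star x) = (u : B) - 1 := by rw [hu]; abel
    rw [h2, sub_mul, one_mul, h1]
  have herr : star x - star x * ((n + 1) • (x * star x) * (↑u⁻¹ : B))
      = star x * (↑u⁻¹ : B) := by
    rw [hcv, mul_sub, mul_one]; abel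
  -- norm estimate
  have hq0 : (0 : B) ≤ (↑u⁻¹ : B) * (x * star x) * (↑u⁻¹ : B) := by
    have := star_left_conjugate_nonneg hh0 (↑u⁻¹ : B)
    rwa [hvsa.star_eq] at this
  have hkey : ((n : ℝ) + 1) • ((↑u⁻¹ : B) * (x * star x) * (↑u⁻¹ : B)) ≤ 1 := by
    have h1 : (↑u⁻¹ : B) * ((n + 1) • (x * star x)) * (↑u⁻¹ : B)
        ≤ (↑u⁻¹ : B) * (u : B) * (↑u⁻¹ : B) := conjugate_le_conjugate_of_nonneg hcd hv0
    have h2 : (↑u⁻¹ : B) * (u : B) * (↑u⁻¹ : B) = (↑u⁻¹ : B) := by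
      rw [u.inv_mul, one_mul]
    calc ((n : ℝ) + 1) • ((↑u⁻¹ : B) * (x * star x) * (↑u⁻¹ : B))
        = (n + 1 : ℕ) • ((↑u⁻¹ : B) * (x * star x) * (↑u⁻¹ : B)) := by
          rw [← Nat.cast_smul_eq_nsmul ℝ]; push_cast; ring_nf
      _ = (↑u⁻¹ : B) * ((n + 1) • (x * star x)) * (↑u⁻¹ : B) := by
          rw [mul_smul_comm, smul_mul_assoc]
      _ ≤ (↑u⁻¹ : B) * (u : B) * (↑u⁻¹ : B) := h1
      _ = (↑u⁻¹ : B) := h2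
      _ ≤ 1 := hv1
  have hqnorm : ‖(↑u⁻¹ : B) * (x * star x) * (↑u⁻¹ : B)‖ ≤ ((n : ℝ) + 1)⁻¹ := by
    have hnn : (0 : ℝ) < (n : ℝ) + 1 := by positivity
    have hsm : (0 : B) ≤ ((n : ℝ) + 1) • ((↑u⁻¹ : B) * (x * star x) * (↑u⁻¹ : B)) :=
      smul_nonneg hnn.le hq0
    have hb := CStarAlgebra.norm_le_norm_of_nonneg_of_le hsm hkey
    rw [norm_smul, Real.norm_eq_abs, abs_of_pos hnn, norm_one, ← le_div_iff₀' hnn] at hb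
    simpa [one_div] using hb
  have hnormsq : ‖star x * (↑u⁻¹ : B)‖ ^ 2 ≤ ((n : ℝ) + 1)⁻¹ := by
    have e1 : ‖star x * (↑u⁻¹ : B)‖ ^ 2
        = ‖star (star x * (↑u⁻¹ : B)) * (star x * (↑u⁻¹ : B))‖ := by
      rw [CStarRing.norm_star_mul_self]; ring
    have e2 : star (star x * (↑u⁻¹ : B)) * (star x * (↑u⁻¹ : B))
        = (↑u⁻¹ : B) * (x * star x) * (↑u⁻¹ : B) := by
      rw [star_mul, star_star, hvsa.star_eq]
      noncomm_ring
    rw [e1, e2]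
    exact hqnorm
  refine ⟨_, hyI, ?_⟩
  rw [dist_eq_norm, herr]
  have hlt : ((n : ℝ) + 1)⁻¹ < ε ^ 2 := by
    rw [inv_lt_comm₀ (by positivity) (by positivity)]
    calc (ε ^ 2)⁻¹ < n := hn
      _ < (n : ℝ) + 1 := by linarith
  exact lt_of_pow_lt_pow_left₀ 2 hε.le (lt_of_le_of_lt hnormsq hlt)


/-- Let `B` be a unital C*-algebra, `I` a closed two-sided ideal, `A` a
unital sub-C*-algebra with `B = A + I`.  Let `φ` be a state on `A` and `ψ` a positive
linear functional on `I`, with canonical (positive) extension `ψ̃` to `B`.  If `φ ≥ ψ̃`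
on `A` and `φ = ψ` on `A ∩ I`, then there is a state `ρ` on `B` with `ρ|_A = φ` and
`ρ|_I = ψ`. -/
theorem stmt_13 {B : Type*} [NormedRing B] [StarRing B] [CStarRing B]
    [NormedAlgebra ℂ B] [CompleteSpace B] [StarModule ℂ B]
    (A : StarSubalgebra ℂ B)
    (I : Submodule ℂ B) (hIclosed : IsClosed (I : Set B))
    (hIideal : ∀ b : B, ∀ x ∈ I, b * x ∈ I ∧ x * b ∈ I)
    (hsum : ∀ b : B, ∃ a : A, ∃ x ∈ I, b = (a : B) + x)
    -- the state φ on A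
    (φ : A →ₗ[ℂ] ℂ) (hφ1 : φ 1 = 1)
    (hφpos : ∀ a : A, 0 ≤ (φ (star a * a)).re ∧ (φ (star a * a)).im = 0)
    -- the canonical positive extension ψ̃ of the positive functional ψ on I
    (ψt : B →ₗ[ℂ] ℂ)
    (hψtpos : ∀ b : B, 0 ≤ (ψt (star b * b)).re ∧ (ψt (star b * b)).im = 0)
    -- φ ≥ ψ̃ on A
    (hdom : ∀ a : A, (ψt ((star a * a : A) : B)).re ≤ (φ (star a * a)).re)
    -- φ = ψ on A ∩ I
    (hagree : ∀ a : A, (a : B) ∈ I → φ a = ψt a) :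
    ∃ ρ : B →ₗ[ℂ] ℂ,
      ρ 1 = 1 ∧
      (∀ b : B, 0 ≤ (ρ (star b * b)).re ∧ (ρ (star b * b)).im = 0) ∧
      (∀ a : A, ρ a = φ a) ∧
      (∀ x ∈ I, ρ x = ψt x) := by
  classical
  letI : CStarAlgebra B :=
    { ‹NormedRing B›, ‹StarRing B›, ‹CStarRing B›, ‹NormedAlgebra ℂ B›, ‹CompleteSpace B›,
      ‹StarModule ℂ B› with }
  letI : PartialOrder B := CStarAlgebra.spectralOrder B
  letI : StarOrderedRing B := CStarAlgebra.spectralOrderedRing B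
  have hstar : ∀ x ∈ I, star x ∈ I := aux_star_mem_closed_ideal I hIclosed hIideal
  -- inclusion of A into B as a linear map
  let incl : A →ₗ[ℂ] B := A.toSubalgebra.val.toLinearMap
  have incl_apply : ∀ a : A, incl a = (a : B) := fun a => rfl
  -- the "defect" functional on A
  let χ : A →ₗ[ℂ] ℂ := φ - ψt ∘ₗ incl
  have χ_apply : ∀ a : A, χ a = φ a - ψt (a : B) := fun a => rfl
  let q : B →ₗ[ℂ] B ⧸ I := I.mkQ
  let f : A →ₗ[ℂ] B ⧸ I := q ∘ₗ incl
  have hfsurj : Function.Surjective f := by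
    intro y
    obtain ⟨b, rfl⟩ := Submodule.mkQ_surjective I y
    obtain ⟨a, x, hx, hb⟩ := hsum b
    refine ⟨a, ?_⟩
    show Submodule.Quotient.mk (a : B) = Submodule.Quotient.mk b
    rw [Submodule.Quotient.eq]
    rw [hb]; simpa using I.neg_mem hx
  have hker : LinearMap.ker f ≤ LinearMap.ker χ := by
    intro a ha
    have hmem : (a : B) ∈ I := by
      have : Submodule.Quotient.mk (a : B) = (0 : B ⧸ I) := ha
      simpa [Submodule.Quotient.mk_eq_zero] using this
    have := hagree a hmem
    simp [χ_apply, this]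
  let e := f.quotKerEquivOfSurjective hfsurj
  let χq : (A ⧸ LinearMap.ker f) →ₗ[ℂ] ℂ := (LinearMap.ker f).liftQ χ hker
  let χ' : (B ⧸ I) →ₗ[ℂ] ℂ := χq ∘ₗ (e.symm : (B ⧸ I) →ₗ[ℂ] A ⧸ LinearMap.ker f)
  have he : ∀ a : A, e (Submodule.Quotient.mk a) = f a := fun a => rfl
  have hχ'f : ∀ a : A, χ' (f a) = χ a := by
    intro a
    have h0 : e.symm (f a) = Submodule.Quotient.mk a := by
      rw [← he a, LinearEquiv.symm_apply_apply]
    show χq (e.symm (f a)) = χ a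
    rw [h0]
    exact Submodule.liftQ_apply _ _ _
  -- q kills I
  have hqI : ∀ x ∈ I, q x = 0 := fun x hx => (Submodule.Quotient.mk_eq_zero I).2 hx
  refine ⟨ψt + χ' ∘ₗ q, ?_, ?_, ?_, ?_⟩
  · -- ρ 1 = 1
    have h1 : (1 : B) = ((1 : A) : B) := rfl
    have h2 : χ' (q ((1 : A) : B)) = χ 1 := hχ'f 1
    show ψt 1 + χ' (q 1) = 1
    rw [h1, h2, χ_apply, hφ1]
    ring
  · -- positivity
    intro b
    obtain ⟨a, x, hx, hb⟩ := hsum b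
    have hy : star b * b - (star (a : B) * (a : B)) ∈ I := by
      have h1 : star (a : B) * x ∈ I := (hIideal (star (a : B)) x hx).1
      have h2 : star x * (a : B) ∈ I := (hIideal ((a : B)) (star x) (hstar x hx)).2
      have h3 : star x * x ∈ I := (hIideal (star x) x hx).1
      have h4 : star b * b - star (a : B) * (a : B)
          = star (a : B) * x + star x * (a : B) + star x * x := by
        rw [hb]; simp only [star_add, mul_add, add_mul]; abel
      rw [h4]
      exact I.add_mem (I.add_mem h1 h2) h3
    have hq : q (star b * b) = q (star (a : B) * (a : B)) := by
      rw [← sub_eq_zero, ← map_sub]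
      exact hqI _ hy
    have hA : star (a : B) * (a : B) = ((star a * a : A) : B) := rfl
    have key : χ' (q (star b * b)) = χ (star a * a) := by
      rw [hq, hA]; exact hχ'f (star a * a)
    have hρ : (ψt + χ' ∘ₗ q) (star b * b)
        = ψt (star b * b) + (φ (star a * a) - ψt ((star a * a : A) : B)) := by
      show ψt (star b * b) + χ' (q (star b * b))
        = ψt (star b * b) + (φ (star a * a) - ψt ((star a * a : A) : B))
      rw [key, χ_apply]
    rw [hρ]
    obtain ⟨hr1, hi1⟩ := hψtpos b
    obtain ⟨hr2, hi2⟩ := hφpos a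
    have hd := hdom a
    have hi3 : (ψt ((star a * a : A) : B)).im = 0 := by
      have h6 := (hψtpos (a : B)).2
      rwa [hA] at h6
    constructor
    · simp only [Complex.add_re, Complex.sub_re]
      linarith
    · simp only [Complex.add_im, Complex.sub_im, hi1, hi2, hi3]
      ring
  · -- restriction to A
    intro a
    have h5 : χ' (q ((a : B))) = χ a := hχ'f a
    show ψt ↑a + χ' (q ↑a) = φ a
    rw [h5, χ_apply]
    ring
  · -- restriction to I
    intro x hx
    show ψt x + χ' (q x) = ψt x
    rw [hqI x hx, map_zero, add_zero]
end

section
/- Let Σ be a compact totally disconnected Hausdorff space whose topology has a basis of clopen sets of the form V(X,Y) (with X, Y ranging over finite index sets). For every a ≥ 0 in C(Σ) and every ε > 0 there exist finitely many pairwise choices of basic clopen sets V₁,…,Vₙ and positive reals λ₁,…,λₙ such that b = Σᵢ λᵢ 1_{Vᵢ} satisfies 0 ≤ b ≤ a and ‖a − b‖ < ε. -/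
/-- Let `Σ` be a closed subspace of the Cantor space `2^𝒢` (`𝒢`
countable), whose topology has the basis of clopen sets
`V(X,Y) = {c : x ∈ c ∀x ∈ X, y ∉ c ∀y ∈ Y}` for finite `X, Y ⊆ 𝒢`.  For every
continuous `a ≥ 0` on `Σ` and every `ε > 0` there are basic clopen sets `V₁, …, Vₙ`
and positive reals `λ₁, …, λₙ` such that `b = Σᵢ λᵢ 1_{Vᵢ}` satisfies `0 ≤ b ≤ a`
and `‖a − b‖ < ε`. -/
theorem stmt_14 {𝒢 : Type*} [Countable 𝒢] (K : Set (𝒢 → Bool)) (hK : IsClosed K)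
    (a : {c : 𝒢 → Bool // c ∈ K} → ℝ) (ha : Continuous a)
    (hapos : ∀ s, 0 ≤ a s) (ε : ℝ) (hε : 0 < ε) :
    ∃ (n : ℕ) (X Y : Fin n → Finset 𝒢) (lam : Fin n → ℝ)
      (b : {c : 𝒢 → Bool // c ∈ K} → ℝ),
      (∀ i, 0 < lam i) ∧
      (b = fun s => ∑ i, lam i *
        (if (∀ x ∈ X i, s.1 x = true) ∧ (∀ y ∈ Y i, s.1 y = false) then 1 else 0)) ∧
      (∀ s, 0 ≤ b s ∧ b s ≤ a s) ∧
      (∀ s, |a s - b s| < ε) := by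
  classical
  haveI : CompactSpace {c : 𝒢 → Bool // c ∈ K} := isCompact_iff_compactSpace.mp hK.isCompact
  -- uniform continuity: a finite set of coordinates controls a up to ε/2
  have key : ∃ T : Finset 𝒢, ∀ s t : {c : 𝒢 → Bool // c ∈ K},
      (∀ g ∈ T, s.1 g = t.1 g) → |a s - a t| < ε / 2 := by
    have hC : IsClosed {p : {c : 𝒢 → Bool // c ∈ K} × {c : 𝒢 → Bool // c ∈ K} |
        ε / 2 ≤ |a p.1 - a p.2|} :=
      isClosed_le continuous_const (((ha.comp continuous_fst).sub (ha.comp continuous_snd)).abs)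
    have hU : ∀ g : 𝒢, IsOpen {p : {c : 𝒢 → Bool // c ∈ K} × {c : 𝒢 → Bool // c ∈ K} |
        ¬ p.1.1 g = p.2.1 g} := by
      intro g
      exact isOpen_compl_iff.mpr (isClosed_eq
        (((continuous_apply g).comp continuous_subtype_val).comp continuous_fst)
        (((continuous_apply g).comp continuous_subtype_val).comp continuous_snd))
    have hcover : {p : {c : 𝒢 → Bool // c ∈ K} × {c : 𝒢 → Bool // c ∈ K} |
        ε / 2 ≤ |a p.1 - a p.2|} ⊆ ⋃ g, {p | ¬ p.1.1 g = p.2.1 g} := by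
      intro p hp
      by_contra hcon
      simp only [Set.mem_iUnion, Set.mem_setOf_eq, not_exists, not_not] at hcon
      have hpp : p.1 = p.2 := Subtype.ext (funext hcon)
      rw [Set.mem_setOf_eq, hpp, sub_self, abs_zero] at hp
      linarith
    obtain ⟨T, hT⟩ := hC.isCompact.elim_finite_subcover _ hU hcover
    refine ⟨T, fun s t hst => ?_⟩
    by_contra hcon
    push_neg at hcon
    have hmem : (s, t) ∈ ⋃ g ∈ T, {p : {c : 𝒢 → Bool // c ∈ K} ×
        {c : 𝒢 → Bool // c ∈ K} | ¬ p.1.1 g = p.2.1 g} := hT hcon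
    simp only [Set.mem_iUnion, Set.mem_setOf_eq] at hmem
    obtain ⟨g, hgT, hg⟩ := hmem
    exact hg (hst g hgT)
  obtain ⟨T, hkey⟩ := key
  set Cell : Finset 𝒢 → Set {c : 𝒢 → Bool // c ∈ K} := fun X =>
    {s | (∀ g ∈ X, s.1 g = true) ∧ ∀ g ∈ T \ X, s.1 g = false} with hCellDef
  set lamX : Finset 𝒢 → ℝ := fun X => sInf (a '' Cell X) with hlamXDef
  have hmemCell : ∀ s : {c : 𝒢 → Bool // c ∈ K},
      s ∈ Cell (T.filter fun g => s.1 g = true) := by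
    intro s
    refine ⟨fun g hg => (Finset.mem_filter.mp hg).2, fun g hg => ?_⟩
    rcases Finset.mem_sdiff.mp hg with ⟨hgT, hgX⟩
    have h : ¬ s.1 g = true := fun h => hgX (Finset.mem_filter.mpr ⟨hgT, h⟩)
    simpa using h
  have hdisj : ∀ X ∈ T.powerset, ∀ s : {c : 𝒢 → Bool // c ∈ K},
      s ∈ Cell X → X = T.filter fun g => s.1 g = true := by
    intro X hX s hs
    have hXT : X ⊆ T := Finset.mem_powerset.mp hX
    ext g
    simp only [Finset.mem_filter]
    constructor
    · intro hg; exact ⟨hXT hg, hs.1 g hg⟩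
    · rintro ⟨hgT, hgt⟩
      by_contra hgX
      have := hs.2 g (Finset.mem_sdiff.mpr ⟨hgT, hgX⟩)
      rw [this] at hgt
      exact Bool.false_ne_true hgt
  have hbdd : ∀ X, BddBelow (a '' Cell X) := by
    intro X
    exact ⟨0, by rintro x ⟨t, -, rfl⟩; exact hapos t⟩
  have hlam_nonneg : ∀ X, 0 ≤ lamX X := by
    intro X
    exact Real.sInf_nonneg (by rintro x ⟨t, -, rfl⟩; exact hapos t)
  have hlam_le : ∀ X, ∀ s ∈ Cell X, lamX X ≤ a s := by
    intro X s hs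
    exact csInf_le (hbdd X) ⟨s, hs, rfl⟩
  have hnear : ∀ X, ∀ s ∈ Cell X, a s < lamX X + ε := by
    intro X s hs
    have hne : (a '' Cell X).Nonempty := ⟨a s, s, hs, rfl⟩
    have h1 : sInf (a '' Cell X) < lamX X + ε / 2 := by
      show lamX X < lamX X + ε / 2
      linarith
    obtain ⟨x, ⟨t, ht, rfl⟩, hx⟩ := exists_lt_of_csInf_lt hne h1
    have hst : |a s - a t| < ε / 2 := by
      apply hkey
      intro g hg
      by_cases hgX : g ∈ X
      · rw [hs.1 g hgX, ht.1 g hgX]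
      · rw [hs.2 g (Finset.mem_sdiff.mpr ⟨hg, hgX⟩), ht.2 g (Finset.mem_sdiff.mpr ⟨hg, hgX⟩)]
    have := abs_lt.mp hst
    linarith [this.2]
  set S : Finset (Finset 𝒢) := T.powerset.filter (fun X => 0 < lamX X) with hSDef
  refine ⟨S.card, fun i => (S.equivFin.symm i).1, fun i => T \ (S.equivFin.symm i).1,
    fun i => lamX (S.equivFin.symm i).1, fun s => ∑ i, lamX (S.equivFin.symm i).1 *
      (if (∀ x ∈ (S.equivFin.symm i).1, s.1 x = true) ∧
          (∀ y ∈ T \ (S.equivFin.symm i).1, s.1 y = false) then 1 else 0),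
    ?_, rfl, ?_, ?_⟩
  · intro i
    have := (S.equivFin.symm i).2
    exact (Finset.mem_filter.mp this).2
  all_goals {
    have hb : ∀ s : {c : 𝒢 → Bool // c ∈ K},
        (∑ i, lamX (S.equivFin.symm i).1 *
          (if (∀ x ∈ (S.equivFin.symm i).1, s.1 x = true) ∧
              (∀ y ∈ T \ (S.equivFin.symm i).1, s.1 y = false) then 1 else 0)) =
        if (T.filter fun g => s.1 g = true) ∈ S then lamX (T.filter fun g => s.1 g = true)
        else 0 := by
      intro s
      have e1 : (∑ i, lamX (S.equivFin.symm i).1 *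
          (if (∀ x ∈ (S.equivFin.symm i).1, s.1 x = true) ∧
              (∀ y ∈ T \ (S.equivFin.symm i).1, s.1 y = false) then 1 else 0)) =
          ∑ X ∈ S, lamX X *
            (if (∀ x ∈ X, s.1 x = true) ∧ (∀ y ∈ T \ X, s.1 y = false) then 1 else 0) := by
        rw [Equiv.sum_comp S.equivFin.symm (fun x : {X // X ∈ S} => lamX x.1 *
          (if (∀ g ∈ x.1, s.1 g = true) ∧ (∀ g ∈ T \ x.1, s.1 g = false) then 1 else 0))]
        exact Finset.sum_coe_sort S (fun X => lamX X *
          (if (∀ x ∈ X, s.1 x = true) ∧ (∀ y ∈ T \ X, s.1 y = false) then 1 else 0))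
      rw [e1]
      have hzero : ∀ X ∈ S, X ≠ (T.filter fun g => s.1 g = true) →
          lamX X * (if (∀ x ∈ X, s.1 x = true) ∧ (∀ y ∈ T \ X, s.1 y = false) then 1 else 0)
            = 0 := by
        intro X hXS hne
        rw [if_neg, mul_zero]
        intro hcond
        exact hne (hdisj X (Finset.mem_filter.mp hXS).1 s hcond)
      by_cases h : (T.filter fun g => s.1 g = true) ∈ S
      · rw [if_pos h, Finset.sum_eq_single_of_mem _ h hzero, if_pos (show (∀ x ∈ T.filter (fun g => s.1 g = true), s.1 x = true) ∧
          (∀ y ∈ T \ T.filter (fun g => s.1 g = true), s.1 y = false) from hmemCell s), mul_one]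
      · rw [if_neg h]
        apply Finset.sum_eq_zero
        intro X hXS
        exact hzero X hXS (fun heq => h (heq ▸ hXS))
    first
    | · intro s
        beta_reduce; rw [hb s]
        by_cases h : (T.filter fun g => s.1 g = true) ∈ S
        · rw [if_pos h]
          exact ⟨le_of_lt (Finset.mem_filter.mp h).2, hlam_le _ s (hmemCell s)⟩
        · rw [if_neg h]
          exact ⟨le_refl 0, hapos s⟩
    | · intro s
        beta_reduce; rw [hb s]
        by_cases h : (T.filter fun g => s.1 g = true) ∈ S
        · rw [if_pos h]
          have h1 := hlam_le _ s (hmemCell s)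
          have h2 := hnear _ s (hmemCell s)
          rw [abs_of_nonneg (by linarith)]
          linarith
        · rw [if_neg h]
          have h2 := hnear _ s (hmemCell s)
          have h3 : ¬ 0 < lamX (T.filter fun g => s.1 g = true) := fun hpos =>
            h (Finset.mem_filter.mpr ⟨Finset.mem_powerset.mpr (Finset.filter_subset _ _), hpos⟩)
          have h4 := hlam_nonneg (T.filter fun g => s.1 g = true)
          have h5 : lamX (T.filter fun g => s.1 g = true) = 0 := le_antisymm (not_lt.mp h3) h4
          rw [sub_zero, abs_of_nonneg (hapos s)]
          rw [h5] at h2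
          linarith
  }
end

section
/- Let A be a finite 0–1 matrix over a finite set 𝒢 with no identically zero columns, β ∈ (0,∞), and N : 𝒢 → (1,∞). The map ρ ↦ (ρ(q_x))_{x∈𝒢} is a bijection from the set of β-invariant states ρ on the commutative C*-algebra 𝒬 = C(Σ_A) onto the set of nonnegative vectors v = (v_x) satisfying A N^{-β} v = v and Σ_x N(x)^{-β} v_x = 1. -/
section Stmt19Aux

private lemma s19_boole_prod {ι M₀ : Type*} [CommMonoidWithZero M₀] (s : Finset ι)
    (p : ι → Prop) [DecidablePred p] [Decidable (∀ i ∈ s, p i)] :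
    ∏ i ∈ s, (if p i then (1 : M₀) else 0) = if ∀ i ∈ s, p i then 1 else 0 := by
  by_cases h : ∀ i ∈ s, p i
  · rw [if_pos h, Finset.prod_eq_one]; intro i hi; rw [if_pos (h i hi)]
  · rw [if_neg h]; push_neg at h; obtain ⟨i, hi, hpi⟩ := h
    exact Finset.prod_eq_zero hi (if_neg hpi)

private lemma s19_ite_mul_ite {M₀ : Type*} [MulZeroOneClass M₀] (P Q : Prop)
    [Decidable P] [Decidable Q] [Decidable (P ∧ Q)] :
    (if P then (1 : M₀) else 0) * (if Q then (1 : M₀) else 0) = if P ∧ Q then 1 else 0 := by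
  by_cases hP : P <;> by_cases hQ : Q
  · rw [if_pos hP, if_pos hQ, if_pos ⟨hP, hQ⟩, one_mul]
  · rw [if_pos hP, if_neg hQ, if_neg (fun h : P ∧ Q => hQ h.2), mul_zero]
  · rw [if_neg hP, if_neg (fun h : P ∧ Q => hP h.1), zero_mul]
  · rw [if_neg hP, if_neg (fun h : P ∧ Q => hP h.1), zero_mul]

variable {𝒢 : Type*} [Fintype 𝒢] [DecidableEq 𝒢] (A : 𝒢 → 𝒢 → Bool)

private lemma s19_prod_apply (X Y : Finset 𝒢)
    (c : {c : 𝒢 → Bool // ∃ z : 𝒢, ∀ x, c x = A x z}) :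
    ((∏ x ∈ X, fun c : {c : 𝒢 → Bool // ∃ z : 𝒢, ∀ x, c x = A x z} =>
        if c.1 x then (1 : ℂ) else 0) *
     ∏ y ∈ Y, ((1 : {c : 𝒢 → Bool // ∃ z : 𝒢, ∀ x, c x = A x z} → ℂ) -
        fun c => if c.1 y then (1 : ℂ) else 0)) c
    = if (∀ x ∈ X, (c.1 x : Prop)) ∧ (∀ y ∈ Y, ¬ (c.1 y : Prop)) then 1 else 0 := by
  classical
  rw [Pi.mul_apply, Finset.prod_apply, Finset.prod_apply]
  have h1 : (∏ x ∈ X, (fun c' : {c : 𝒢 → Bool // ∃ z : 𝒢, ∀ x, c x = A x z} =>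
      if c'.1 x then (1 : ℂ) else 0) c) = if ∀ x ∈ X, (c.1 x : Prop) then 1 else 0 :=
    s19_boole_prod X _
  have h2 : (∏ y ∈ Y, ((1 : {c : 𝒢 → Bool // ∃ z : 𝒢, ∀ x, c x = A x z} → ℂ) -
      fun c' : {c : 𝒢 → Bool // ∃ z : 𝒢, ∀ x, c x = A x z} =>
        if c'.1 y then (1 : ℂ) else 0) c)
      = if ∀ y ∈ Y, ¬ (c.1 y : Prop) then 1 else 0 := by
    have e : ∀ y ∈ Y, ((1 : {c : 𝒢 → Bool // ∃ z : 𝒢, ∀ x, c x = A x z} → ℂ) -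
        fun c' : {c : 𝒢 → Bool // ∃ z : 𝒢, ∀ x, c x = A x z} =>
          if c'.1 y then (1 : ℂ) else 0) c = if ¬ (c.1 y : Prop) then 1 else 0 := by
      intro y _
      rcases h : c.1 y <;> simp [h]
    rw [Finset.prod_congr rfl e]
    exact s19_boole_prod Y _
  rw [h1, h2, s19_ite_mul_ite]

private lemma s19_coef (X Y : Finset 𝒢) (z : 𝒢) :
    ((∏ x ∈ X, (if A x z then (1 : ℝ) else 0)) *
     (∏ y ∈ Y, (1 - if A y z then (1 : ℝ) else 0)))
    = if (∀ x ∈ X, (A x z : Prop)) ∧ (∀ y ∈ Y, ¬ (A y z : Prop)) then 1 else 0 := by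
  classical
  have h1 : (∏ x ∈ X, (if A x z then (1 : ℝ) else 0)) =
      if ∀ x ∈ X, (A x z : Prop) then 1 else 0 := s19_boole_prod X _
  have h2 : (∏ y ∈ Y, (1 - if A y z then (1 : ℝ) else 0)) =
      if ∀ y ∈ Y, ¬ (A y z : Prop) then 1 else 0 := by
    have e : ∀ y ∈ Y, (1 - if A y z then (1 : ℝ) else 0) = if ¬ (A y z : Prop) then 1 else 0 := by
      intro y _; rcases h : A y z <;> simp [h]
    rw [Finset.prod_congr rfl e]
    exact s19_boole_prod Y _
  rw [h1, h2, s19_ite_mul_ite]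

end Stmt19Aux

section KeyPart
variable {𝒢 : Type*} [Fintype 𝒢] [DecidableEq 𝒢] (A : 𝒢 → 𝒢 → Bool)

private abbrev S19 (A : 𝒢 → 𝒢 → Bool) : Type _ := {c : 𝒢 → Bool // ∃ z : 𝒢, ∀ x, c x = A x z}

private lemma s19_q_proj (z : 𝒢) :
    star (fun c : S19 A => if c.1 z then (1 : ℂ) else 0) *
      (fun c : S19 A => if c.1 z then (1 : ℂ) else 0)
    = fun c : S19 A => if c.1 z then (1 : ℂ) else 0 := by
  funext c; rcases h : c.1 z <;> simp [Pi.mul_apply, Pi.star_apply, h]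

private lemma s19_cond_iff (z : 𝒢) (c : S19 A) :
    ((∀ x ∈ Finset.univ.filter (fun x => (c.1 x : Prop)), (A x z : Prop)) ∧
     (∀ y ∈ Finset.univ.filter (fun y => ¬ (c.1 y : Prop)), ¬ (A y z : Prop)))
    ↔ ∀ x, A x z = c.1 x := by
  constructor
  · rintro ⟨hA, hB⟩ x
    rcases hx : c.1 x with _ | _
    · have := hB x (Finset.mem_filter.2 ⟨Finset.mem_univ x, by simp [hx]⟩)
      simpa using this
    · have := hA x (Finset.mem_filter.2 ⟨Finset.mem_univ x, by simp [hx]⟩)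
      simpa using this
  · intro h
    refine ⟨fun x hx => ?_, fun y hy => ?_⟩
    · have := (Finset.mem_filter.1 hx).2
      rw [h x]; exact this
    · have := (Finset.mem_filter.1 hy).2
      rw [h y]; exact this

private lemma s19_key (β : ℝ) (N : 𝒢 → ℝ) (ρ : (S19 A → ℂ) →ₗ[ℂ] ℂ)
    (hinv : ∀ X Y : Finset 𝒢,
      ρ ((∏ x ∈ X, fun c : S19 A => if c.1 x then (1 : ℂ) else 0) *
         ∏ y ∈ Y, ((1 : S19 A → ℂ) - fun c => if c.1 y then (1 : ℂ) else 0))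
        = ∑ z : 𝒢,
            (((∏ x ∈ X, (if A x z then (1 : ℝ) else 0)) *
              (∏ y ∈ Y, (1 - if A y z then (1 : ℝ) else 0)) *
              (N z) ^ (-β) : ℝ) : ℂ) *
            ρ (fun c => if c.1 z then 1 else 0)) (f : S19 A → ℂ) :
    ρ f = ∑ z : 𝒢, ((N z ^ (-β) : ℝ) : ℂ) * ρ (fun c => if c.1 z then 1 else 0) *
      f ⟨fun x => A x z, z, fun _ => rfl⟩ := by
  classical
  have h2 : ∀ c : S19 A, ρ (Pi.single c (1 : ℂ)) =
      ∑ z : 𝒢, (if (∀ x, A x z = c.1 x) then ((N z ^ (-β) : ℝ) : ℂ) else 0) *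
        ρ (fun c => if c.1 z then 1 else 0) := by
    intro c
    have hsingle : (Pi.single c (1 : ℂ) : S19 A → ℂ) =
        (∏ x ∈ Finset.univ.filter (fun x => (c.1 x : Prop)),
          fun c' : S19 A => if c'.1 x then (1 : ℂ) else 0) *
        ∏ y ∈ Finset.univ.filter (fun y => ¬ (c.1 y : Prop)),
          ((1 : S19 A → ℂ) - fun c' => if c'.1 y then (1 : ℂ) else 0) := by
      funext c'
      rw [s19_prod_apply]
      by_cases h : c' = c
      · subst h
        rw [if_pos ⟨fun x hx => (Finset.mem_filter.1 hx).2,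
              fun y hy => (Finset.mem_filter.1 hy).2⟩]
        simp
      · rw [if_neg, Pi.single_apply, if_neg h]
        rintro ⟨hA, hB⟩
        apply h
        apply Subtype.ext
        funext x
        rcases hx : c.1 x with _ | _
        · have := hB x (Finset.mem_filter.2 ⟨Finset.mem_univ x, by simp [hx]⟩)
          simpa using this
        · exact hA x (Finset.mem_filter.2 ⟨Finset.mem_univ x, by simp [hx]⟩)
    rw [hsingle, hinv]
    refine Finset.sum_congr rfl fun z _ => ?_
    congr 1
    rw [s19_coef]
    by_cases h : (∀ x ∈ Finset.univ.filter (fun x => (c.1 x : Prop)), (A x z : Prop)) ∧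
        (∀ y ∈ Finset.univ.filter (fun y => ¬ (c.1 y : Prop)), ¬ (A y z : Prop))
    · rw [if_pos h, if_pos ((s19_cond_iff A z c).1 h)]
      push_cast
      ring
    · rw [if_neg h, if_neg (fun h' => h ((s19_cond_iff A z c).2 h'))]
      push_cast
      ring
  conv_lhs => rw [← Finset.univ_sum_single f, map_sum]
  have h1 : ∀ c : S19 A, ρ (Pi.single c (f c)) = f c * ρ (Pi.single c 1) := by
    intro c
    rw [show (Pi.single c (f c) : S19 A → ℂ) = f c • (Pi.single c 1 : S19 A → ℂ) by
      funext i; by_cases h : i = c <;> simp [Pi.single_apply, h]]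
    rw [map_smul, smul_eq_mul]
  rw [Finset.sum_congr rfl fun c _ => by rw [h1 c, h2 c, Finset.mul_sum]]
  rw [Finset.sum_comm]
  refine Finset.sum_congr rfl fun z _ => ?_
  have step : ∀ c : S19 A,
      f c * ((if (∀ x, A x z = c.1 x) then ((N z ^ (-β) : ℝ) : ℂ) else 0) *
        ρ (fun c => if c.1 z then 1 else 0))
      = if c = (⟨fun x => A x z, z, fun _ => rfl⟩ : S19 A) then
          f c * (((N z ^ (-β) : ℝ) : ℂ) * ρ (fun c => if c.1 z then 1 else 0)) else 0 := by
    intro c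
    by_cases h : ∀ x, A x z = c.1 x
    · rw [if_pos h, if_pos (Subtype.ext (funext fun x => (h x).symm))]
    · rw [if_neg h, if_neg, zero_mul, mul_zero]
      intro hc
      exact h fun x => by rw [hc]
  rw [Finset.sum_congr rfl fun c _ => step c, Finset.sum_ite_eq' Finset.univ,
    if_pos (Finset.mem_univ _)]
  ring

private lemma s19_real (ρ : (S19 A → ℂ) →ₗ[ℂ] ℂ)
    (hpos : ∀ f : S19 A → ℂ,
      0 ≤ (ρ (star f * f)).re ∧ (ρ (star f * f)).im = 0) (z : 𝒢) :
    ρ (fun c => if c.1 z then (1 : ℂ) else 0)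
      = (((ρ (fun c : S19 A => if c.1 z then (1 : ℂ) else 0)).re : ℝ) : ℂ) := by
  have him := (hpos (fun c : S19 A => if c.1 z then (1 : ℂ) else 0)).2
  rw [s19_q_proj] at him
  apply Complex.ext <;> simp [him]

private lemma s19_nonneg (ρ : (S19 A → ℂ) →ₗ[ℂ] ℂ)
    (hpos : ∀ f : S19 A → ℂ,
      0 ≤ (ρ (star f * f)).re ∧ (ρ (star f * f)).im = 0) (z : 𝒢) :
    0 ≤ (ρ (fun c : S19 A => if c.1 z then (1 : ℂ) else 0)).re := by
  have h := (hpos (fun c : S19 A => if c.1 z then (1 : ℂ) else 0)).1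
  rwa [s19_q_proj] at h

end KeyPart


/-- Let `A` be a finite 0–1 matrix over a finite set `𝒢` with no
identically zero columns, `β ∈ (0,∞)`, and `N : 𝒢 → (1,∞)`.  Let `Σ_A` be the (finite)
set of columns of `A` and `𝒬 = C(Σ_A)` with generators `q_x(c) = [x ∈ c]`.  The map
`ρ ↦ (ρ(q_x))_x` is a bijection from the set of `β`-invariant states on `𝒬` — states
satisfying `ρ(q(X,Y)) = Σ_z A(X,Y,z) N(z)^{-β} ρ(q_z)` for all finite `X, Y ⊆ 𝒢` —
onto the set of nonnegative vectors `v` with `A N^{-β} v = v` and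
`Σ_x N(x)^{-β} v_x = 1`. -/
theorem stmt_19 {𝒢 : Type*} [Fintype 𝒢] [DecidableEq 𝒢] (A : 𝒢 → 𝒢 → Bool)
    (hcol : ∀ y : 𝒢, ∃ x, A x y = true)
    (β : ℝ) (hβ : 0 < β) (N : 𝒢 → ℝ) (hN : ∀ x, 1 < N x) :
    Set.BijOn
      (fun ρ : ({c : 𝒢 → Bool // ∃ z : 𝒢, ∀ x, c x = A x z} → ℂ) →ₗ[ℂ] ℂ =>
        fun x : 𝒢 => (ρ (fun c => if c.1 x then 1 else 0)).re)
      {ρ | ρ 1 = 1 ∧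
        (∀ f : {c : 𝒢 → Bool // ∃ z : 𝒢, ∀ x, c x = A x z} → ℂ,
          0 ≤ (ρ (star f * f)).re ∧ (ρ (star f * f)).im = 0) ∧
        (∀ X Y : Finset 𝒢,
          ρ ((∏ x ∈ X, fun c => if c.1 x then (1 : ℂ) else 0) *
             ∏ y ∈ Y, ((1 : {c : 𝒢 → Bool // ∃ z : 𝒢, ∀ x, c x = A x z} → ℂ) -
               fun c => if c.1 y then (1 : ℂ) else 0))
            = ∑ z : 𝒢,
                (((∏ x ∈ X, (if A x z then (1 : ℝ) else 0)) *
                  (∏ y ∈ Y, (1 - if A y z then (1 : ℝ) else 0)) *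
                  (N z) ^ (-β) : ℝ) : ℂ) *
                ρ (fun c => if c.1 z then 1 else 0))}
      {v : 𝒢 → ℝ | (∀ x, 0 ≤ v x) ∧
        (∀ x, (∑ y : 𝒢, (if A x y then (1 : ℝ) else 0) * (N y) ^ (-β) * v y) = v x) ∧
        (∑ x : 𝒢, (N x) ^ (-β) * v x) = 1} := by
  classical
  refine ⟨?_, ?_, ?_⟩
  · -- MapsTo
    rintro ρ ⟨h1, hpos, hinv⟩
    refine ⟨fun x => s19_nonneg A ρ hpos x, fun x => ?_, ?_⟩
    · -- eigenvector equation
      have h := hinv {x} ∅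
      simp only [Finset.prod_singleton, Finset.prod_empty, mul_one] at h
      have h2 : ρ (fun c => if c.1 x then (1 : ℂ) else 0)
          = ((∑ z : 𝒢, (if A x z then (1 : ℝ) else 0) * N z ^ (-β) *
              (ρ (fun c : S19 A => if c.1 z then (1 : ℂ) else 0)).re : ℝ) : ℂ) := by
        rw [h, Complex.ofReal_sum]
        refine Finset.sum_congr rfl fun z _ => ?_
        rw [s19_real A ρ hpos z]
        by_cases hz : A x z <;> simp [hz, Complex.ofReal_mul] <;> ring
      have := congrArg Complex.re h2
      rw [Complex.ofReal_re] at this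
      exact this.symm
    · -- normalization
      have h := hinv ∅ ∅
      simp only [Finset.prod_empty, mul_one, one_mul] at h
      rw [h1] at h
      have h2 : (1 : ℂ) = ((∑ z : 𝒢, N z ^ (-β) *
          (ρ (fun c : S19 A => if c.1 z then (1 : ℂ) else 0)).re : ℝ) : ℂ) := by
        conv_lhs => rw [h]
        rw [Complex.ofReal_sum]
        refine Finset.sum_congr rfl fun z _ => ?_
        rw [s19_real A ρ hpos z]
        simp [Complex.ofReal_mul]
      have := congrArg Complex.re h2
      rw [Complex.ofReal_re, Complex.one_re] at this
      exact this.symm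
  · -- InjOn
    rintro ρ₁ ⟨h11, hpos1, hinv1⟩ ρ₂ ⟨h21, hpos2, hinv2⟩ heq
    apply LinearMap.ext
    intro f
    rw [s19_key A β N ρ₁ hinv1 f, s19_key A β N ρ₂ hinv2 f]
    refine Finset.sum_congr rfl fun z _ => ?_
    have e : (ρ₁ (fun c : S19 A => if c.1 z then (1 : ℂ) else 0)).re
        = (ρ₂ (fun c : S19 A => if c.1 z then (1 : ℂ) else 0)).re :=
      congrFun heq z
    rw [s19_real A ρ₁ hpos1 z, s19_real A ρ₂ hpos2 z, e]
  · -- SurjOn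
    rintro v ⟨hv0, hv1, hv2⟩
    set T : (S19 A → ℂ) →ₗ[ℂ] ℂ :=
      { toFun := fun f => ∑ z : 𝒢, ((N z ^ (-β) * v z : ℝ) : ℂ) *
          f ⟨fun x => A x z, z, fun _ => rfl⟩
        map_add' := by
          intro f g
          simp [Pi.add_apply, mul_add, Finset.sum_add_distrib]
        map_smul' := by
          intro a f
          simp only [Pi.smul_apply, smul_eq_mul, RingHom.id_apply]
          rw [Finset.mul_sum]
          exact Finset.sum_congr rfl fun z _ => by ring } with hT
    have Tapp : ∀ f : S19 A → ℂ, T f = ∑ z : 𝒢, ((N z ^ (-β) * v z : ℝ) : ℂ) *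
        f ⟨fun x => A x z, z, fun _ => rfl⟩ := fun f => rfl
    have Tq : ∀ x : 𝒢, T (fun c => if c.1 x then (1 : ℂ) else 0) = ((v x : ℝ) : ℂ) := by
      intro x
      rw [Tapp]
      rw [← hv1 x, Complex.ofReal_sum]
      refine Finset.sum_congr rfl fun z _ => ?_
      show ((N z ^ (-β) * v z : ℝ) : ℂ) * (if A x z then (1 : ℂ) else 0) = _
      by_cases hz : A x z <;> simp [hz, Complex.ofReal_mul] <;> ring
    refine ⟨T, ⟨?_, ?_, ?_⟩, ?_⟩
    · -- T 1 = 1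
      rw [Tapp]
      simp only [Pi.one_apply, mul_one]
      rw [← Complex.ofReal_sum, hv2, Complex.ofReal_one]
    · -- positivity
      intro f
      have hTf : T (star f * f) = ((∑ z : 𝒢, (N z ^ (-β) * v z) *
          Complex.normSq (f ⟨fun x => A x z, z, fun _ => rfl⟩) : ℝ) : ℂ) := by
        rw [Tapp, Complex.ofReal_sum]
        refine Finset.sum_congr rfl fun z _ => ?_
        rw [Pi.mul_apply, Pi.star_apply, Complex.star_def,
          ← Complex.normSq_eq_conj_mul_self, ← Complex.ofReal_mul]
      have hnn : 0 ≤ ∑ z : 𝒢, (N z ^ (-β) * v z) *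
          Complex.normSq (f ⟨fun x => A x z, z, fun _ => rfl⟩) := by
        refine Finset.sum_nonneg fun z _ => ?_
        refine mul_nonneg (mul_nonneg ?_ (hv0 z)) (Complex.normSq_nonneg _)
        exact Real.rpow_nonneg (le_of_lt (lt_trans zero_lt_one (hN z))) _
      rw [hTf]
      constructor
      · rw [Complex.ofReal_re]; exact hnn
      · rw [Complex.ofReal_im]
    · -- invariance
      intro X Y
      rw [Tapp]
      have lhs_eq : ∀ z : 𝒢,
          ((∏ x ∈ X, fun c : S19 A => if c.1 x then (1 : ℂ) else 0) *
           ∏ y ∈ Y, ((1 : S19 A → ℂ) - fun c => if c.1 y then (1 : ℂ) else 0))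
            (⟨fun x => A x z, z, fun _ => rfl⟩ : S19 A)
          = if (∀ x ∈ X, (A x z : Prop)) ∧ (∀ y ∈ Y, ¬ (A y z : Prop)) then 1 else 0 := by
        intro z
        rw [s19_prod_apply]
      rw [Finset.sum_congr rfl fun z _ => by rw [lhs_eq z]]
      refine Finset.sum_congr rfl fun z _ => ?_
      rw [Tq z, s19_coef]
      by_cases h : (∀ x ∈ X, (A x z : Prop)) ∧ (∀ y ∈ Y, ¬ (A y z : Prop))
      · rw [if_pos h, if_pos h]
        simp only [Complex.ofReal_mul, Complex.ofReal_one, one_mul, mul_one]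
        try ring
      · rw [if_neg h, if_neg h]
        simp
    · -- image equals v
      funext x
      show (T (fun c => if c.1 x then (1 : ℂ) else 0)).re = v x
      rw [Tq x, Complex.ofReal_re]
end
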